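/- arXiv:math/0603401 — 5 statements merged into one kernel-verified Lean document; each statement's English description precedes it below -/
import Mathlib

section
/- Fix an integer d ≥ 1. For each n ≥ 1 define f_n : ℝ → ℝ to be the function which is constant on each interval [ (k − n/d)/√(n/d), (k+1 − n/d)/√(n/d) ) for every integer k, and which satisfies f_n( (k − n/d)/√(n/d) ) = √(n/d) · (n/d)^k e^{−n/d} / k! if k is a non-negative integer, and 0 if k is a negative integer. For a function f : ℝ → ℝ define Δ_n f (y) = ( f(y + √(d/n)) − f(y) ) / √(d/n), and let Δ_n^α denote the α-fold iteration of Δ_n. Then for every integer α ≥ 0 there exists a polynomial P_α (with real coefficients, taking positive values on ℝ) such that | (Δ_n^α f_n)(y) | < P_α(y) · e^{−|y|} holds for all n ≥ 1 and all y ∈ ℝ. -/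
open Filter

/-- The function `f_n : ℝ → ℝ` of the paper: it is constant on each interval
`[(k - n/d)/√(n/d), (k+1 - n/d)/√(n/d))`, `k ∈ ℤ`, and at the left endpoint of such an
interval it takes the value `√(n/d) · (n/d)^k e^{-n/d} / k!` if `k ≥ 0` and `0` if `k < 0`. -/
noncomputable def fn (d n : ℕ) (y : ℝ) : ℝ :=
  let c : ℝ := (n : ℝ) / d
  let k : ℤ := ⌊y * Real.sqrt c + c⌋
  if 0 ≤ k then Real.sqrt c * c ^ k.toNat * Real.exp (-c) / (k.toNat.factorial : ℝ) else 0

/-- The difference operator `Δ_n f (y) = (f(y + √(d/n)) - f(y)) / √(d/n)`. -/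
noncomputable def Dn (d n : ℕ) (f : ℝ → ℝ) : ℝ → ℝ :=
  fun y => (f (y + Real.sqrt ((d : ℝ) / n)) - f y) / Real.sqrt ((d : ℝ) / n)

/-!
Write `c = n/d`, `s = √c` and let `p_c(k) = e^{-c} c^k / k!` be the Poisson weights. Then
`f_n(y) = s · p_c(⌊ys + c⌋)`, and shifting `y` by `√(d/n) = 1/s` shifts the index by one, so
`Δ_n^α f_n(y) = s^{α+1} (Δ^α p_c)(K)` with `K = ⌊ys + c⌋` and `Δ` the forward difference on `ℤ`.
By the Rodrigues formula for Charlier polynomials, `c^α (Δ^α p_c)(K) = p_c(K+α) Q_α(K+α)`, where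
`Q_α` has weighted degree `α`: `|Q_α(t)| ≤ B (s + |t - c|)^α` uniformly in `c ≥ 1/d`. The Poisson
tail bound `s p_c(k) e^{|k-c|/s} ≤ A` follows from the exponential tilt
`p_c(k) e^{λ(k-c)} = p_{c e^λ}(k) e^{c(e^λ-1-λ)}` with `λ = ±1/s` together with the Stirling bound
`√μ p_μ(k) ≤ 2`. Hence `|Δ_n^α f_n(y)| ≤ A B (1 + x)^α e^{-x}` with `x = |K + α - c|/s`,
and `x` differs from `|y|` by at most `(α + 1)√d`.
-/

open Real fwdDiff
open scoped Nat

lemma exp_sub_one_sub_le_sq_mul_exp_abs (u : ℝ) : exp u - 1 - u ≤ u ^ 2 * exp |u| := by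
  have h₁ := add_one_le_exp u
  have h₂ : exp u * (1 - u) ≤ 1 := by
    have := mul_le_mul_of_nonneg_left (one_sub_le_exp_neg u) (exp_pos u).le
    rwa [← exp_add, add_neg_cancel, exp_zero] at this
  rcases le_or_gt 0 u with hu | hu
  · rw [abs_of_nonneg hu]
    nlinarith [exp_pos u]
  · rw [abs_of_neg hu]
    have : exp u ≤ 1 := exp_le_one_iff.2 hu.le
    nlinarith [one_le_exp (neg_nonneg.2 hu.le)]

lemma sqrt_mul_mul_exp_one_sub_pow_le_two {x : ℝ} (hx : 0 ≤ x) {m : ℕ} (hm : m ≠ 0) :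
    √x * (x * exp (1 - x)) ^ m ≤ 2 := by
  have hle : x * exp (1 - x) ≤ 1 := by
    calc x * exp (1 - x) ≤ exp (x - 1) * exp (1 - x) := by
          gcongr; linarith [add_one_le_exp (x - 1)]
      _ = 1 := by rw [← exp_add]; simp
  have hsqrt : √x ≤ exp ((x - 1) / 2) := by
    rw [exp_half]
    exact sqrt_le_sqrt (by linarith [add_one_le_exp (x - 1)])
  have hhalf : x ≤ 2 * exp (x / 2 - 1) := by linarith [add_one_le_exp (x / 2 - 1)]
  calc √x * (x * exp (1 - x)) ^ m
      ≤ exp ((x - 1) / 2) * (x * exp (1 - x)) :=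
        mul_le_mul hsqrt (pow_le_of_le_one (by positivity) hle hm) (by positivity) (by positivity)
    _ = x * exp ((1 - x) / 2) := by rw [mul_left_comm, ← exp_add]; ring_nf
    _ ≤ 2 * exp (x / 2 - 1) * exp ((1 - x) / 2) := by gcongr
    _ = 2 * exp (-1 / 2) := by rw [mul_assoc, ← exp_add]; ring_nf
    _ ≤ 2 := by linarith [exp_le_one_iff.2 (by norm_num : (-1 / 2 : ℝ) ≤ 0)]

lemma one_add_pow_mul_exp_neg_le {x z a : ℝ} (hx : 0 ≤ x) (h : |x - z| ≤ a) (α : ℕ) :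
    (1 + x) ^ α * exp (-x) ≤ exp a * (1 + a + z) ^ α * exp (-z) := by
  obtain ⟨h₁, h₂⟩ := abs_le.1 h
  calc (1 + x) ^ α * exp (-x) ≤ (1 + a + z) ^ α * exp (a + -z) :=
        mul_le_mul (pow_le_pow_left₀ (by linarith) (by linarith) α) (exp_le_exp.2 (by linarith))
          (exp_pos _).le (pow_nonneg (by linarith) α)
    _ = exp a * (1 + a + z) ^ α * exp (-z) := by rw [exp_add]; ring

lemma abs_abs_floor_add_sub_div_sub_abs_le {s : ℝ} (hs : 0 < s) (b y : ℝ) (α : ℕ) :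
    |(|⌊y * s + b⌋ + α - b| / s - |y|)| ≤ (α + 1) / s := by
  have h₁ := Int.floor_le (y * s + b)
  have h₂ := Int.lt_floor_add_one (y * s + b)
  have hz : |(⌊y * s + b⌋ + α - b : ℝ) - y * s| ≤ α + 1 := by
    rw [abs_le]; constructor <;> linarith
  have hdiv : |(⌊y * s + b⌋ + α - b : ℝ)| / s - |y| =
      (|(⌊y * s + b⌋ + α - b : ℝ)| - |y * s|) / s := by
    rw [abs_mul, abs_of_pos hs]; field_simp
  rw [hdiv, abs_div, abs_of_pos hs]
  gcongr
  exact (abs_abs_sub_abs_le _ _).trans hz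

lemma fwdDiff_iter_id_mul {R : Type*} [CommRing R] (h : R) (f : R → R) (m : ℕ) (t : R) :
    Δ_[h] ^[m] (fun t => t * f t) t = t * Δ_[h] ^[m] f t + m * h * Δ_[h] ^[m - 1] f (t + h) := by
  induction m generalizing t with
  | zero => simp
  | succ m ih =>
    rw [Function.iterate_succ_apply', fwdDiff, ih, ih, Function.iterate_succ_apply' _ m f]
    rcases m with _ | m
    · simp only [Function.iterate_zero, id_eq, Nat.cast_zero, zero_mul, zero_tsub, add_zero,
        zero_add, Nat.cast_one, one_mul, tsub_self, fwdDiff]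
      ring
    · simp only [Nat.add_sub_cancel, Function.iterate_succ_apply' _ m f, fwdDiff]
      push_cast
      ring

noncomputable def poissonWeight (c : ℝ) (k : ℤ) : ℝ :=
  if 0 ≤ k then c ^ k.toNat * exp (-c) / k.toNat ! else 0

lemma poissonWeight_natCast (c : ℝ) (k : ℕ) : poissonWeight c k = c ^ k * exp (-c) / k ! := by
  simp [poissonWeight]

lemma poissonWeight_of_neg (c : ℝ) {k : ℤ} (hk : k < 0) : poissonWeight c k = 0 :=
  if_neg (by omega)

lemma poissonWeight_nonneg {c : ℝ} (hc : 0 ≤ c) (k : ℤ) : 0 ≤ poissonWeight c k := by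
  unfold poissonWeight
  split_ifs <;> positivity

lemma add_one_mul_poissonWeight_add_one (c : ℝ) (k : ℤ) :
    (k + 1) * poissonWeight c (k + 1) = c * poissonWeight c k := by
  rcases le_or_gt 0 k with hk | hk
  · lift k to ℕ using hk
    rw [show (k : ℤ) + 1 = (k + 1 : ℕ) by push_cast; rfl, poissonWeight_natCast,
      poissonWeight_natCast, Nat.factorial_succ]
    push_cast
    field_simp
    ring
  · rw [poissonWeight_of_neg c hk, mul_zero]
    rcases (show k = -1 ∨ k + 1 < 0 by omega) with rfl | hk'
    · simp
    · rw [poissonWeight_of_neg c hk', mul_zero]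

lemma poissonWeight_mul_exp (c u : ℝ) (k : ℤ) :
    poissonWeight c k * exp (u * (k - c)) =
      poissonWeight (c * exp u) k * exp (c * (exp u - 1 - u)) := by
  rcases le_or_gt 0 k with hk | hk
  · lift k to ℕ using hk
    simp only [poissonWeight_natCast, Int.cast_natCast, mul_pow, ← exp_nat_mul,
      div_mul_eq_mul_div, mul_assoc, ← exp_add]
    congr 3
    ring
  · simp [poissonWeight_of_neg _ hk]

lemma sqrt_mul_poissonWeight_le_two {μ : ℝ} (hμ : 0 < μ) (k : ℤ) :
    √μ * poissonWeight μ k ≤ 2 := by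
  rcases lt_or_ge k 0 with hk | hk
  · simp [poissonWeight_of_neg _ hk]
  lift k to ℕ using hk
  rw [poissonWeight_natCast]
  rcases Nat.eq_zero_or_pos k with rfl | hk
  · have : √μ ≤ exp μ := by
      nlinarith [sq_sqrt hμ.le, sq_nonneg (√μ - 1), add_one_le_exp μ]
    calc √μ * (μ ^ 0 * exp (-μ) / (0 ! : ℕ)) ≤ exp μ * exp (-μ) := by
          simpa using mul_le_mul_of_nonneg_right this (exp_pos _).le
      _ ≤ 2 := by rw [← exp_add]; norm_num
  have hk' : (0 : ℝ) < k := by exact_mod_cast hk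
  obtain ⟨x, hx, rfl⟩ : ∃ x, 0 ≤ x ∧ μ = k * x := ⟨μ / k, by positivity, by field_simp⟩
  have hfac : √k * (k / exp 1) ^ k ≤ k ! := by
    refine le_trans ?_ (Stirling.le_factorial_stirling k)
    gcongr
    nlinarith [pi_gt_three]
  have hsplit : √(k * x) * (k * x) ^ k * exp (-(k * x)) =
      √k * (k / exp 1) ^ k * (√x * (x * exp (1 - x)) ^ k) := by
    rw [sqrt_mul hk'.le, mul_pow, mul_pow, div_pow, ← exp_nat_mul, ← exp_nat_mul,
      show (k : ℝ) * (1 - x) = k * 1 + -(k * x) by ring, exp_add]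
    field_simp
  calc √(k * x) * ((k * x) ^ k * exp (-(k * x)) / k !)
      = √k * (k / exp 1) ^ k * (√x * (x * exp (1 - x)) ^ k) / k ! := by rw [← hsplit]; ring
    _ ≤ k ! * 2 / k ! := by
        gcongr
        exact sqrt_mul_mul_exp_one_sub_pow_le_two hx hk.ne'
    _ = 2 := by field_simp

lemma sqrt_mul_poissonWeight_mul_exp_le {c a : ℝ} (hc : 0 < c) (ha : (√c)⁻¹ ≤ a) (k : ℤ) :
    √c * poissonWeight c k * exp (|k - c| / √c) ≤ 2 * exp (a / 2 + exp a) := by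
  have hs : 0 < √c := sqrt_pos.2 hc
  obtain ⟨u, hu, hku⟩ : ∃ u, |u| = (√c)⁻¹ ∧ |k - c| / √c = u * (k - c) := by
    rcases le_or_gt c k with h | h
    · exact ⟨(√c)⁻¹, by simp [hs.le], by rw [abs_of_nonneg (by linarith)]; ring⟩
    · exact ⟨-(√c)⁻¹, by simp [hs.le], by rw [abs_of_neg (by linarith)]; ring⟩
  have hμ : 0 < c * exp u := by positivity
  have hsqrt : √c = exp (-u / 2) * √(c * exp u) := by
    rw [sqrt_mul hc.le, ← exp_half, ← mul_assoc, mul_comm _ √c, mul_assoc, ← exp_add,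
      neg_div, neg_add_cancel, exp_zero, mul_one]
  have htilt : c * (exp u - 1 - u) ≤ exp a := by
    calc c * (exp u - 1 - u) ≤ c * (u ^ 2 * exp |u|) :=
          mul_le_mul_of_nonneg_left (exp_sub_one_sub_le_sq_mul_exp_abs u) hc.le
      _ = exp |u| := by rw [← sq_abs u, hu, inv_pow, sq_sqrt hc.le]; field_simp
      _ ≤ exp a := exp_le_exp.2 (hu ▸ ha)
  have hhalf : -u / 2 ≤ a / 2 := by linarith [neg_abs_le u]
  calc √c * poissonWeight c k * exp (|k - c| / √c)
      = exp (-u / 2) * (√(c * exp u) * poissonWeight (c * exp u) k) *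
          exp (c * (exp u - 1 - u)) := by
        rw [hku, mul_assoc, poissonWeight_mul_exp, hsqrt]; ring
    _ ≤ exp (a / 2) * 2 * exp (exp a) := by
        gcongr
        · exact mul_nonneg (sqrt_nonneg _) (poissonWeight_nonneg hμ.le k)
        · exact sqrt_mul_poissonWeight_le_two hμ k
    _ = 2 * exp (a / 2 + exp a) := by rw [exp_add]; ring

/-- `charlier c α` is `c ^ α` times the Charlier polynomial `C_α(t; c)`. -/
noncomputable def charlier (c : ℝ) : ℕ → ℝ → ℝ
  | 0 => fun _ => 1
  | α + 1 => fun t => c * charlier c α t - t * charlier c α (t - 1)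

lemma pow_mul_fwdDiff_iter_poissonWeight (c : ℝ) (α : ℕ) (k : ℤ) :
    c ^ α * Δ_[1] ^[α] (poissonWeight c) k = poissonWeight c (k + α) * charlier c α (k + α) := by
  induction α generalizing k with
  | zero => simp [charlier]
  | succ α ih =>
    have step := add_one_mul_poissonWeight_add_one c (k + α)
    rw [Function.iterate_succ_apply', fwdDiff, pow_succ', mul_assoc, mul_sub, ih, ih,
      charlier]
    push_cast at step ⊢
    rw [show k + 1 + (α : ℤ) = k + α + 1 by ring, show k + ((α : ℤ) + 1) = k + α + 1 by ring,
      show (k : ℝ) + 1 + α = k + α + 1 by ring, show (k : ℝ) + (α + 1) = k + α + 1 by ring,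
      add_sub_cancel_right]
    linear_combination charlier c α (k + α) * step

lemma fwdDiff_iter_charlier_succ (c : ℝ) (α m : ℕ) (t : ℝ) :
    Δ_[-1] ^[m] (charlier c (α + 1)) t =
      -(c * Δ_[-1] ^[m + 1] (charlier c α) t) + (c - t) * Δ_[-1] ^[m] (charlier c α) (t - 1)
        + m * Δ_[-1] ^[m - 1] (charlier c α) (t - 2) := by
  have hsplit : charlier c (α + 1) =
      c • charlier c α + (-1 : ℝ) • fun t => t * charlier c α (t + -1) := by
    ext t; simp [charlier, sub_eq_add_neg]
  rw [hsplit, fwdDiff_iter_add, fwdDiff_iter_const_smul, fwdDiff_iter_const_smul,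
    Function.iterate_succ_apply']
  simp only [Pi.add_apply, Pi.smul_apply, smul_eq_mul, fwdDiff_iter_id_mul,
    fwdDiff_iter_comp_add, fwdDiff]
  ring_nf

lemma sqrt_add_abs_sub_sub_le {c a : ℝ} (hc : 0 < c) (ha : (√c)⁻¹ ≤ a) (t : ℝ) {δ : ℝ}
    (hδ : |δ| ≤ 2) : √c + |t - δ - c| ≤ (1 + 2 * a) * (√c + |t - c|) := by
  have hs : 0 < √c := sqrt_pos.2 hc
  have has : 1 ≤ a * √c := by rwa [inv_le_iff_one_le_mul₀ hs] at ha
  have ha0 : 0 ≤ a := le_trans (inv_nonneg.2 hs.le) ha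
  have : |t - δ - c| ≤ |t - c| + |δ| := by
    rw [show t - δ - c = (t - c) + -δ by ring, ← abs_neg δ]; exact abs_add_le _ _
  nlinarith [abs_nonneg (t - c)]

lemma sqrt_pow_mul_abs_fwdDiff_iter_charlier_succ_le {c a B : ℝ} {α M : ℕ} (hc : 0 < c)
    (hca : (√c)⁻¹ ≤ a) (hB : 0 ≤ B)
    (hR : ∀ m ≤ M + 1, ∀ t, √c ^ m * |Δ_[-1] ^[m] (charlier c α) t| ≤ B * (√c + |t - c|) ^ α)
    {m : ℕ} (hm : m ≤ M) (t : ℝ) :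
    √c ^ m * |Δ_[-1] ^[m] (charlier c (α + 1)) t| ≤
      B * (1 + (1 + 2 * a) ^ α + M * (1 + 2 * a) ^ α) * (√c + |t - c|) ^ (α + 1) := by
  set K := 1 + 2 * a
  set s := √c
  set w := s + |t - c|
  set R := fun m => Δ_[-1] ^[m] (charlier c α)
  have hs : 0 < s := sqrt_pos.2 hc
  have hshift : ∀ δ : ℝ, |δ| ≤ 2 → B * (s + |t - δ - c|) ^ α ≤ B * (K ^ α * w ^ α) :=
    fun δ hδ => by
      rw [← mul_pow]
      gcongr
      exact sqrt_add_abs_sub_sub_le hc hca t hδ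
  have h₁ : s ^ m * |c * R (m + 1) t| ≤ B * w ^ (α + 1) := by
    calc s ^ m * |c * R (m + 1) t| = s * (s ^ (m + 1) * |R (m + 1) t|) := by
          rw [abs_mul, abs_of_pos hc, ← sq_sqrt hc.le]; ring
      _ ≤ w * (B * w ^ α) := by
          gcongr ?_ * ?_
          · exact le_add_of_nonneg_right (abs_nonneg _)
          · exact hR (m + 1) (by omega) t
      _ = B * w ^ (α + 1) := by ring
  have h₂ : s ^ m * |(c - t) * R m (t - 1)| ≤ B * K ^ α * w ^ (α + 1) := by
    calc s ^ m * |(c - t) * R m (t - 1)| = |t - c| * (s ^ m * |R m (t - 1)|) := by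
          rw [abs_mul, abs_sub_comm]; ring
      _ ≤ w * (B * (K ^ α * w ^ α)) := by
          gcongr ?_ * ?_
          · exact le_add_of_nonneg_left hs.le
          · exact (hR m (by omega) (t - 1)).trans (hshift 1 (by norm_num))
      _ = B * K ^ α * w ^ (α + 1) := by ring
  have h₃ : s ^ m * |m * R (m - 1) (t - 2)| ≤ M * B * K ^ α * w ^ (α + 1) := by
    rcases m with _ | m
    · have hK : 0 ≤ K ^ α := pow_nonneg (by linarith [inv_pos.2 hs]) α
      simp only [pow_zero, CharP.cast_eq_zero, zero_mul, abs_zero, mul_zero]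
      exact mul_nonneg (mul_nonneg (mul_nonneg (Nat.cast_nonneg M) hB) hK) (by positivity)
    calc s ^ (m + 1) * |((m + 1 : ℕ) : ℝ) * R m (t - 2)|
        = (m + 1 : ℕ) * s * (s ^ m * |R m (t - 2)|) := by rw [abs_mul, Nat.abs_cast]; ring
      _ ≤ M * w * (B * (K ^ α * w ^ α)) := by
          gcongr ?_ * ?_ * ?_
          · exact_mod_cast hm
          · exact le_add_of_nonneg_right (abs_nonneg _)
          · exact (hR m (by omega) (t - 2)).trans (hshift 2 (by norm_num))
      _ = M * B * K ^ α * w ^ (α + 1) := by ring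
  calc s ^ m * |Δ_[-1] ^[m] (charlier c (α + 1)) t|
      ≤ s ^ m * |c * R (m + 1) t| + s ^ m * |(c - t) * R m (t - 1)|
        + s ^ m * |m * R (m - 1) (t - 2)| := by
        rw [fwdDiff_iter_charlier_succ, ← mul_add, ← mul_add, ← abs_neg (c * R (m + 1) t)]
        gcongr
        exact abs_add_three _ _ _
    _ ≤ B * (1 + K ^ α + M * K ^ α) * w ^ (α + 1) := by linear_combination h₁ + h₂ + h₃

/-- The bound is carried for all backward differences of `charlier c α` at once, because the
recursion for `charlier c (α + 1)` involves the difference of `charlier c α`. -/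
lemma exists_bound_fwdDiff_iter_charlier (α M : ℕ) {a : ℝ} (ha : 0 ≤ a) :
    ∃ B, 0 ≤ B ∧ ∀ c, 0 < c → (√c)⁻¹ ≤ a → ∀ m ≤ M, ∀ t,
      √c ^ m * |Δ_[-1] ^[m] (charlier c α) t| ≤ B * (√c + |t - c|) ^ α := by
  induction α generalizing M with
  | zero =>
    refine ⟨1, zero_le_one, fun c _ _ m _ t => ?_⟩
    rcases m with _ | m
    · simp [charlier]
    · have hconst : Δ_[-1] (charlier c 0) = 0 := by ext; simp [charlier, fwdDiff]
      rw [Function.iterate_succ_apply, hconst, Function.iterate_fixed (by ext; simp [fwdDiff])]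
      simp
  | succ α ih =>
    obtain ⟨B, hB, hR⟩ := ih (M + 1)
    have hK : 0 ≤ (1 + 2 * a) ^ α := pow_nonneg (by linarith) α
    exact ⟨_, mul_nonneg hB (add_nonneg (add_nonneg zero_le_one hK)
      (mul_nonneg (Nat.cast_nonneg M) hK)), fun c hc hca m hm t =>
      sqrt_pow_mul_abs_fwdDiff_iter_charlier_succ_le hc hca hB (hR c hc hca) hm t⟩

lemma exists_bound_fwdDiff_iter_poissonWeight (α : ℕ) {a : ℝ} (ha : 0 ≤ a) :
    ∃ A, 0 ≤ A ∧ ∀ c, 0 < c → (√c)⁻¹ ≤ a → ∀ k : ℤ,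
      √c ^ (α + 1) * |Δ_[1] ^[α] (poissonWeight c) k| ≤
        A * ((1 + |k + α - c| / √c) ^ α * exp (-(|k + α - c| / √c))) := by
  obtain ⟨B, hB, hQ⟩ := exists_bound_fwdDiff_iter_charlier α 0 ha
  refine ⟨2 * exp (a / 2 + exp a) * B, by positivity, fun c hc hca k => ?_⟩
  have hs : 0 < √c := sqrt_pos.2 hc
  set x := |k + α - c| / √c
  have hQ' : |charlier c α (k + α)| ≤ B * (√c * (1 + x)) ^ α := by
    rw [mul_one_add, mul_div_cancel₀ _ hs.ne']
    simpa using hQ c hc hca 0 le_rfl (k + α)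
  have htail : √c * poissonWeight c (k + α) ≤ 2 * exp (a / 2 + exp a) * exp (-x) := by
    have := sqrt_mul_poissonWeight_mul_exp_le hc hca (k + α)
    push_cast at this
    rwa [← le_div_iff₀ (exp_pos _), div_eq_mul_inv, ← exp_neg] at this
  have hdiff : √c ^ (α + 1) * |Δ_[1] ^[α] (poissonWeight c) k| =
      √c * poissonWeight c (k + α) * |charlier c α (k + α)| / √c ^ α := by
    have key := pow_mul_fwdDiff_iter_poissonWeight c α k
    rw [show c ^ α = √c ^ α * √c ^ α by rw [← mul_pow, mul_self_sqrt hc.le]] at key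
    rw [eq_div_iff (pow_pos hs α).ne', ← abs_of_nonneg (poissonWeight_nonneg hc.le (k + α)),
      mul_assoc √c, ← abs_mul, ← key, abs_mul, abs_of_pos (by positivity : 0 < √c ^ α * √c ^ α)]
    ring
  rw [hdiff, div_le_iff₀ (pow_pos hs α)]
  calc √c * poissonWeight c (k + α) * |charlier c α (k + α)|
      ≤ 2 * exp (a / 2 + exp a) * exp (-x) * (B * (√c * (1 + x)) ^ α) := by gcongr
    _ = 2 * exp (a / 2 + exp a) * B * ((1 + x) ^ α * exp (-x)) * √c ^ α := by
        rw [mul_pow]; ring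

lemma sqrt_div_eq_inv_sqrt_div (d n : ℕ) : √((d : ℝ) / n) = (√((n : ℝ) / d))⁻¹ := by
  rw [← sqrt_inv, inv_div]

lemma iterate_Dn_comp_floor (d n : ℕ) (hc : 0 < (n : ℝ) / d) (b : ℝ) (h : ℤ → ℝ) (α : ℕ)
    (y : ℝ) :
    (Dn d n)^[α] (fun y => h ⌊y * √((n : ℝ) / d) + b⌋) y =
      √((n : ℝ) / d) ^ α * Δ_[1] ^[α] h ⌊y * √((n : ℝ) / d) + b⌋ := by
  have hs : 0 < √((n : ℝ) / d) := sqrt_pos.2 hc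
  induction α generalizing y with
  | zero => simp
  | succ α ih =>
    have hshift : ⌊(y + (√((n : ℝ) / d))⁻¹) * √((n : ℝ) / d) + b⌋ =
        ⌊y * √((n : ℝ) / d) + b⌋ + 1 := by
      rw [← Int.floor_add_one]; congr 1; field_simp; ring
    rw [Function.iterate_succ_apply', Dn, sqrt_div_eq_inv_sqrt_div d n, ih, ih, hshift,
      Function.iterate_succ_apply' (fwdDiff 1), fwdDiff]
    field_simp
    ring

lemma fn_eq_sqrt_mul_poissonWeight (d n : ℕ) :
    fn d n = fun y => √((n : ℝ) / d) * poissonWeight ((n : ℝ) / d)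
      ⌊y * √((n : ℝ) / d) + (n : ℝ) / d⌋ := by
  ext y
  simp only [fn, poissonWeight]
  split_ifs <;> ring

lemma iterate_Dn_fn (d n : ℕ) (hc : 0 < (n : ℝ) / d) (α : ℕ) (y : ℝ) :
    (Dn d n)^[α] (fn d n) y = √((n : ℝ) / d) ^ (α + 1) *
      Δ_[1] ^[α] (poissonWeight ((n : ℝ) / d)) ⌊y * √((n : ℝ) / d) + (n : ℝ) / d⌋ := by
  rw [fn_eq_sqrt_mul_poissonWeight,
    iterate_Dn_comp_floor d n hc _ (fun k => √((n : ℝ) / d) * poissonWeight _ k),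
    show (fun k => √((n : ℝ) / d) * poissonWeight ((n : ℝ) / d) k) =
      √((n : ℝ) / d) • poissonWeight ((n : ℝ) / d) from rfl,
    fwdDiff_iter_const_smul, Pi.smul_apply, smul_eq_mul, pow_succ, mul_assoc]

lemma exists_bound_iterate_Dn_fn {d : ℕ} (hd : 1 ≤ d) (α : ℕ) :
    ∃ A, 0 ≤ A ∧ ∀ n : ℕ, 1 ≤ n → ∀ y : ℝ,
      |(Dn d n)^[α] (fn d n) y| ≤ A * (1 + (α + 1) * √(d : ℝ) + |y|) ^ α * exp (-|y|) := by
  obtain ⟨A, hA, hbound⟩ := exists_bound_fwdDiff_iter_poissonWeight α (sqrt_nonneg (d : ℝ))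
  refine ⟨A * exp ((α + 1) * √(d : ℝ)), by positivity, fun n hn y => ?_⟩
  have hd' : (1 : ℝ) ≤ d := by exact_mod_cast hd
  have hn' : (1 : ℝ) ≤ n := by exact_mod_cast hn
  rw [iterate_Dn_fn d n (by positivity)]
  set c := (n : ℝ) / d
  have hc : 0 < c := by positivity
  have hca : (√c)⁻¹ ≤ √(d : ℝ) := by
    rw [← sqrt_div_eq_inv_sqrt_div]
    exact sqrt_le_sqrt (div_le_self (by positivity) hn')
  have hx : |(|⌊y * √c + c⌋ + α - c| / √c - |y|)| ≤ (α + 1) * √(d : ℝ) :=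
    (abs_abs_floor_add_sub_div_sub_abs_le (sqrt_pos.2 hc) c y α).trans
      (by rw [div_eq_mul_inv]; exact mul_le_mul_of_nonneg_left hca (by positivity))
  rw [abs_mul, abs_of_pos (by positivity)]
  calc √c ^ (α + 1) * |Δ_[1] ^[α] (poissonWeight c) ⌊y * √c + c⌋| ≤ _ := hbound c hc hca _
    _ ≤ _ := mul_le_mul_of_nonneg_left (one_add_pow_mul_exp_neg_le (by positivity) hx α) hA
    _ = _ := by ring

/-- For every integer `α ≥ 0` there is a polynomial `P_α`, positive on `ℝ`, such that
`|Δ_n^α f_n (y)| < P_α(y) e^{-|y|}` for all `n ≥ 1` and all `y ∈ ℝ`. -/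
theorem iterated_difference_of_fn_dominated
    (d : ℕ) (hd : 1 ≤ d) (α : ℕ) :
    ∃ P : Polynomial ℝ, (∀ y : ℝ, 0 < P.eval y) ∧
      ∀ n : ℕ, 1 ≤ n → ∀ y : ℝ,
        |(Dn d n)^[α] (fn d n) y| < P.eval y * Real.exp (-|y|) := by
  obtain ⟨A, hA, hbound⟩ := exists_bound_iterate_Dn_fn hd α
  set a := (α + 1) * √(d : ℝ)
  have ha : 0 ≤ a := by positivity
  have heval : ∀ y, (Polynomial.C A * (Polynomial.C (2 + a) + Polynomial.X ^ 2) ^ α + 1).eval y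
      = A * (2 + a + y ^ 2) ^ α + 1 := by simp
  refine ⟨_, fun y => by rw [heval]; positivity, fun n hn y => ?_⟩
  have hy : 1 + a + |y| ≤ 2 + a + y ^ 2 := by nlinarith [sq_abs y, sq_nonneg (|y| - 1)]
  calc |(Dn d n)^[α] (fn d n) y| ≤ A * (1 + a + |y|) ^ α * exp (-|y|) := hbound n hn y
    _ ≤ A * (2 + a + y ^ 2) ^ α * exp (-|y|) := by gcongr A * ?_ ^ α * _
    _ < _ := by rw [heval]; exact mul_lt_mul_of_pos_right (lt_add_one _) (exp_pos _)
end

section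
/- Let (ν_m)_{m ≥ 1} be a sequence of positive reals with ν_m → ∞, let y ∈ ℝ, and let (k_m)_{m ≥ 1} be a sequence of non-negative integers such that (k_m − ν_m)/√(ν_m) → y as m → ∞. Then √(ν_m) · ν_m^{k_m} e^{−ν_m} / k_m! → (1/√(2π)) · e^{−y²/2} as m → ∞. In other words, the suitably rescaled point probabilities of the Poisson distribution with parameter ν converge, as ν → ∞, to the density of the standard normal distribution. -/
/-!
Stirling's formula `k! ~ √(2πk) (k/e)^k` turns `√ν ν^k e^{-ν} / k!` into
`(2π k/ν)^{-1/2} exp(-ν klFun (k/ν))` up to a factor tending to `1`, where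
`klFun u = u log u + 1 - u`. As `klFun (1 + t) = t²/2 + O(t³)` and `k/ν - 1` is of order
`ν^{-1/2}`, the exponent `ν klFun (k/ν)` tends to `y²/2`, while `k/ν → 1`.
-/

open Filter Topology Real InformationTheory

lemma abs_log_one_add_sub_add_sq_le {t : ℝ} (ht : |t| ≤ 1 / 2) :
    |log (1 + t) - t + t ^ 2 / 2| ≤ 2 * |t| ^ 3 := by
  have hb := abs_log_sub_add_sum_range_le (x := -t) (by rw [abs_neg]; linarith) 2
  rw [abs_neg, sub_neg_eq_add] at hb
  have hsum : ∑ i ∈ Finset.range 2, (-t) ^ (i + 1) / ((i : ℝ) + 1) = -t + t ^ 2 / 2 := by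
    norm_num [Finset.sum_range_succ]
  calc |log (1 + t) - t + t ^ 2 / 2|
      = |(-t + t ^ 2 / 2) + log (1 + t)| := by ring_nf
    _ ≤ |t| ^ 3 / (1 - |t|) := by rwa [hsum] at hb
    _ ≤ 2 * |t| ^ 3 := by
      rw [div_le_iff₀ (by linarith)]
      nlinarith [pow_nonneg (abs_nonneg t) 3]

lemma abs_klFun_one_add_sub_sq_le {t : ℝ} (ht : |t| ≤ 1 / 2) :
    |klFun (1 + t) - t ^ 2 / 2| ≤ 4 * |t| ^ 3 := by
  set r := log (1 + t) - t + t ^ 2 / 2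
  have hr : |r| ≤ 2 * |t| ^ 3 := abs_log_one_add_sub_add_sq_le ht
  have h1t : |1 + t| ≤ 3 / 2 := by
    calc |1 + t| ≤ |1| + |t| := abs_add_le _ _
      _ ≤ 3 / 2 := by norm_num; linarith
  calc |klFun (1 + t) - t ^ 2 / 2| = |-(t ^ 3 / 2) + (1 + t) * r| := by
        rw [klFun_apply]; congr 1; simp only [r]; ring
    _ ≤ |t| ^ 3 / 2 + 3 / 2 * (2 * |t| ^ 3) := by
        refine (abs_add_le _ _).trans (add_le_add ?_ ?_)
        · rw [abs_neg, abs_div, abs_pow]; norm_num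
        · rw [abs_mul]; exact mul_le_mul h1t hr (abs_nonneg _) (by norm_num)
    _ ≤ 4 * |t| ^ 3 := by nlinarith [pow_nonneg (abs_nonneg t) 3]

section Limits

variable {α : Type*} {l : Filter α} {s u : α → ℝ} {y : ℝ}

lemma tendsto_nhds_one_of_tendsto_mul_sub_one (hs : Tendsto s l atTop)
    (hsu : Tendsto (fun a => s a * (u a - 1)) l (𝓝 y)) : Tendsto u l (𝓝 1) := by
  have h : Tendsto (fun a => s a * (u a - 1) / s a) l (𝓝 0) := hsu.div_atTop hs
  have h' : Tendsto (fun a => u a - 1) l (𝓝 0) := by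
    refine h.congr' ?_
    filter_upwards [hs.eventually_gt_atTop 0] with a ha
    field_simp
  simpa using h'.add_const 1

lemma tendsto_sq_mul_klFun (hs : Tendsto s l atTop)
    (hsu : Tendsto (fun a => s a * (u a - 1)) l (𝓝 y)) :
    Tendsto (fun a => s a ^ 2 * klFun (u a)) l (𝓝 (y ^ 2 / 2)) := by
  have hu : Tendsto (fun a => u a - 1) l (𝓝 0) := by
    simpa using (tendsto_nhds_one_of_tendsto_mul_sub_one hs hsu).sub_const 1
  -- the error `s² (klFun u - (u - 1)² / 2)` is at most `4 |s (u - 1)|³ / s`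
  have herr : Tendsto (fun a => s a ^ 2 * klFun (u a) - (s a * (u a - 1)) ^ 2 / 2) l (𝓝 0) := by
    refine squeeze_zero_norm' ?_ ((hsu.abs.pow 3).const_mul 4 |>.div_atTop hs)
    filter_upwards [hs.eventually_gt_atTop 0,
      (hu.abs.eventually (ge_mem_nhds (by norm_num : |(0 : ℝ)| < 1 / 2)))] with a hsa hua
    have hb := abs_klFun_one_add_sub_sq_le hua
    rw [add_sub_cancel] at hb
    rw [norm_eq_abs, le_div_iff₀ hsa, abs_mul, abs_of_pos hsa]
    calc |s a ^ 2 * klFun (u a) - (s a * (u a - 1)) ^ 2 / 2| * s a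
        = s a ^ 3 * |klFun (u a) - (u a - 1) ^ 2 / 2| := by
          rw [show s a ^ 2 * klFun (u a) - (s a * (u a - 1)) ^ 2 / 2
            = s a ^ 2 * (klFun (u a) - (u a - 1) ^ 2 / 2) by ring, abs_mul, abs_pow,
            abs_of_pos hsa]; ring
      _ ≤ s a ^ 3 * (4 * |u a - 1| ^ 3) := by gcongr
      _ = 4 * (s a * |u a - 1|) ^ 3 := by ring
  simpa using herr.add ((hsu.pow 2).div_const 2)

end Limits

lemma sqrt_mul_pow_mul_exp_neg_div_stirling {ν : ℝ} (hν : 0 < ν) (k : ℕ) :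
    √ν * ν ^ k * exp (-ν) / (√(2 * k * π) * (k / exp 1) ^ k)
      = (√(2 * (k / ν) * π))⁻¹ * exp (-(ν * klFun (k / ν))) := by
  rcases Nat.eq_zero_or_pos k with rfl | hk
  -- at `k = 0` both sides are `0`, by the conventions `x / 0 = 0` and `0⁻¹ = 0`
  · simp
  have hk' : (0 : ℝ) < k := by exact_mod_cast hk
  have hexp : exp (-(ν * klFun (k / ν))) = (ν / k) ^ k * exp 1 ^ k * exp (-ν) := by
    rw [klFun_apply, ← exp_log (show 0 < (ν / k) ^ k by positivity), ← exp_nat_mul,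
      ← exp_add, ← exp_add, log_pow, log_div hν.ne' hk'.ne', log_div hk'.ne' hν.ne']
    congr 1
    field_simp
    ring
  rw [hexp, show 2 * (k / ν) * π = 2 * k * π / ν by ring, sqrt_div' _ hν.le, div_pow, div_pow]
  field_simp

/-- Local central limit theorem for the Poisson distribution: if `ν_m → ∞` and `k_m` are
non-negative integers with `(k_m - ν_m)/√ν_m → y`, then the rescaled point probabilities
`√ν_m · ν_m^{k_m} e^{-ν_m} / k_m!` converge to the standard Gaussian density at `y`. -/
theorem poisson_local_clt
    (ν : ℕ → ℝ) (hν : ∀ m, 0 < ν m) (hν' : Tendsto ν atTop atTop)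
    (y : ℝ) (k : ℕ → ℕ)
    (hk : Tendsto (fun m => ((k m : ℝ) - ν m) / Real.sqrt (ν m)) atTop (nhds y)) :
    Tendsto
      (fun m => Real.sqrt (ν m) * (ν m) ^ (k m) * Real.exp (-(ν m)) / ((k m).factorial : ℝ))
      atTop (nhds ((Real.sqrt (2 * Real.pi))⁻¹ * Real.exp (-y ^ 2 / 2))) := by
  have hs : Tendsto (fun m => √(ν m)) atTop atTop := tendsto_sqrt_atTop.comp hν'
  have hsu : Tendsto (fun m => √(ν m) * (k m / ν m - 1)) atTop (𝓝 y) := by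
    refine hk.congr fun m => ?_
    field_simp [(hν m).ne', (sqrt_pos.2 (hν m)).ne']
    rw [sq_sqrt (hν m).le]
    field_simp [(hν m).ne']
  have hu : Tendsto (fun m => (k m : ℝ) / ν m) atTop (𝓝 1) :=
    tendsto_nhds_one_of_tendsto_mul_sub_one hs hsu
  have hk_top : Tendsto k atTop atTop := by
    rw [← tendsto_natCast_atTop_iff (R := ℝ)]
    refine (hν'.atTop_mul_pos one_pos hu).congr fun m => ?_
    field_simp [(hν m).ne']
  have hgauss : Tendsto (fun m => (√(2 * (k m / ν m) * π))⁻¹ * exp (-(ν m * klFun (k m / ν m))))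
      atTop (𝓝 ((√(2 * 1 * π))⁻¹ * exp (-(y ^ 2 / 2)))) := by
    refine (((hu.const_mul 2).mul_const π).sqrt.inv₀ (by positivity)).mul ?_
    refine (tendsto_sq_mul_klFun hs hsu).neg.rexp.congr fun m => ?_
    rw [sq_sqrt (hν m).le]
  have hstirling := Stirling.factorial_isEquivalent_stirling.comp_tendsto hk_top
  refine (Asymptotics.IsEquivalent.refl.div hstirling).symm.tendsto_nhds ?_
  rw [mul_one, ← neg_div] at hgauss
  exact hgauss.congr fun m => (sqrt_mul_pow_mul_exp_neg_div_stirling (hν m) (k m)).symm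
end

section
/- Let d ≥ 1 and let λ = (λ₁, …, λ_d) be a Young diagram with at most d rows and n = λ₁ + ⋯ + λ_d boxes. Then the number f^λ of standard Young tableaux of shape λ is given by the Frobenius–MacMahon determinantal formula: f^λ = n! · det( 1/(λ_i − i + j)! )_{1 ≤ i, j ≤ d}, where by convention 1/m! = 0 whenever m is a negative integer. -/
/-!
Removing the box that holds the largest entry `n` of a standard Young tableau of shape `λ`
leaves a standard tableau of shape `λ - eᵢ` for a corner `i`, so `f^λ = ∑ᵢ f^(λ - eᵢ)` over
the corners. The determinant `D(λ) = det (1/(λᵢ - i + j)!)` obeys the matching recurrence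
`n · D(λ) = ∑ᵢ D(λ - eᵢ)`: since `1/(m - 1)! = m/m!`, lowering row `i` replaces it by
`(λᵢ - i) · rowᵢ + rowᵢ · diag(j)`, and summing over `i` gives
`(∑ (λᵢ - i) + ∑ j) · D(λ) = n · D(λ)` by cofactor expansion and `adj M * M = det M`.
At a non-corner `i` the lowered matrix has two equal rows or a zero row. Both sides are `1`
for the empty diagram, so induction on `n` finishes.
-/

open Finset

/-- `T : Fin d → ℕ → ℕ` is a standard Young tableau of shape `lam` (a diagram with at most
`d` rows, row `i` having `lam i` boxes, rows and columns indexed from `0`): the entries in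
the boxes of the diagram are the numbers `1, …, n` (`n` the number of boxes), each used
exactly once, strictly increasing along each row and along each column; outside the diagram
we normalize `T` to be `0`. -/
def IsSYT (d : ℕ) (lam : Fin d → ℕ) (T : Fin d → ℕ → ℕ) : Prop :=
  (∀ i j, j < lam i → 1 ≤ T i j ∧ T i j ≤ ∑ k, lam k) ∧
  (∀ i j i' j', j < lam i → j' < lam i' → T i j = T i' j' → i = i' ∧ j = j') ∧
  (∀ m, 1 ≤ m → m ≤ ∑ k, lam k → ∃ i j, j < lam i ∧ T i j = m) ∧
  (∀ i j j', j < j' → j' < lam i → T i j < T i j') ∧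
  (∀ i i' j, i < i' → j < lam i' → T i j < T i' j) ∧
  (∀ i j, ¬ j < lam i → T i j = 0)

/-- `sytCount d lam` is the number `f^λ` of standard Young tableaux of shape `λ = lam`. -/
noncomputable def sytCount (d : ℕ) (lam : Fin d → ℕ) : ℕ :=
  Nat.card { T : Fin d → ℕ → ℕ // IsSYT d lam T }

/-- `lam` is a Young diagram with `n` boxes and at most `d` rows: a weakly decreasing
sequence of nonnegative integers summing to `n`. -/
def IsYoungDiagram (d n : ℕ) (lam : Fin d → ℕ) : Prop :=
  Antitone lam ∧ ∑ i, lam i = n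

/-- `1/m!` for an integer `m`, with the convention that it is `0` for negative `m`. -/
noncomputable def invFactorial (m : ℤ) : ℝ :=
  if 0 ≤ m then ((m.toNat).factorial : ℝ)⁻¹ else 0

namespace Matrix

variable {n R : Type*} [Fintype n] [DecidableEq n] [CommRing R]

theorem det_updateRow_eq_sum_mul_adjugate (M : Matrix n n R) (i : n) (b : n → R) :
    (M.updateRow i b).det = ∑ j, b j * M.adjugate j i := by
  rw [det_eq_sum_mul_adjugate_row _ i]
  congr! 2 with j
  · rw [updateRow_self]
  · rw [adjugate_apply, adjugate_apply, updateRow_idem]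

theorem sum_det_updateRow_mul (M N : Matrix n n R) :
    ∑ i, (M.updateRow i ((M * N) i)).det = N.trace * M.det := by
  simp_rw [det_updateRow_eq_sum_mul_adjugate]
  calc ∑ i, ∑ j, (M * N) i j * M.adjugate j i = (M * N * M.adjugate).trace := by
        simp [trace, mul_apply]
    _ = N.trace * M.det := by
        rw [trace_mul_cycle, adjugate_mul, smul_mul, one_mul, trace_smul, smul_eq_mul, mul_comm]

end Matrix

lemma invFactorial_of_neg {m : ℤ} (h : m < 0) : invFactorial m = 0 := by
  rw [invFactorial, if_neg (by omega)]

lemma invFactorial_zero : invFactorial 0 = 1 := by simp [invFactorial]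

lemma invFactorial_sub_one (m : ℤ) : invFactorial (m - 1) = m * invFactorial m := by
  rcases lt_trichotomy m 0 with h | rfl | h
  · rw [invFactorial_of_neg h, invFactorial_of_neg (by omega), mul_zero]
  · rw [invFactorial_of_neg (by norm_num), Int.cast_zero, zero_mul]
  · obtain ⟨k, rfl⟩ : ∃ k : ℕ, m = k + 1 := ⟨(m - 1).toNat, by omega⟩
    have hk : (k.factorial : ℝ) ≠ 0 := Nat.cast_ne_zero.2 k.factorial_ne_zero
    simp [invFactorial, Nat.factorial_succ, show ((k : ℤ) + 1).toNat = k + 1 by omega,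
      show (0 : ℤ) ≤ k + 1 by omega]
    field_simp

open Matrix

noncomputable def invFactorialMatrix {d : ℕ} (lam : Fin d → ℤ) : Matrix (Fin d) (Fin d) ℝ :=
  of fun i j => invFactorial (lam i - i + j)

section invFactorialMatrix

variable {d : ℕ} (lam : Fin d → ℤ)

lemma invFactorialMatrix_sub_single (i : Fin d) :
    invFactorialMatrix (lam - Pi.single i 1) =
      (invFactorialMatrix lam).updateRow i
        (((lam i - i : ℤ) : ℝ) • invFactorialMatrix lam i +
          (invFactorialMatrix lam * diagonal fun j : Fin d => (j : ℝ)) i) := by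
  ext i' j
  rcases eq_or_ne i' i with rfl | hi'
  · have := invFactorial_sub_one (lam i' - i' + j)
    simp only [invFactorialMatrix, updateRow_self, mul_diagonal, Pi.sub_apply, Pi.single_eq_same,
      Pi.add_apply, Pi.smul_apply, of_apply, smul_eq_mul] at this ⊢
    rw [show lam i' - 1 - i' + j = lam i' - i' + j - 1 by ring, this]
    push_cast
    ring
  · simp [invFactorialMatrix, hi']

lemma sum_det_invFactorialMatrix_sub_single :
    ∑ i, (invFactorialMatrix (lam - Pi.single i 1)).det =
      (∑ i, (lam i : ℝ)) * (invFactorialMatrix lam).det := by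
  simp_rw [invFactorialMatrix_sub_single, det_updateRow_add, det_updateRow_smul,
    updateRow_eq_self, sum_add_distrib, sum_det_updateRow_mul, trace_diagonal, ← sum_mul]
  push_cast
  rw [sum_sub_distrib]
  ring

lemma det_invFactorialMatrix_eq_zero_of_eq {i i' : Fin d} (hii' : i ≠ i')
    (h : lam i - i = lam i' - i') : (invFactorialMatrix lam).det = 0 :=
  det_zero_of_row_eq hii' (funext fun j => by simp [invFactorialMatrix, h])

lemma det_invFactorialMatrix_eq_zero_of_add_le {i : Fin d} (h : lam i + d ≤ i) :
    (invFactorialMatrix lam).det = 0 :=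
  det_eq_zero_of_row_eq_zero i fun j => invFactorial_of_neg (by have := j.isLt; omega)

lemma det_invFactorialMatrix_zero : (invFactorialMatrix (0 : Fin d → ℤ)).det = 1 := by
  have hM : (invFactorialMatrix (0 : Fin d → ℤ)).BlockTriangular id := fun i j hij =>
    invFactorial_of_neg (by simp only [Pi.zero_apply]; have : (j : ℕ) < i := hij; omega)
  rw [det_of_isUpperTriangular hM]
  exact prod_eq_one fun i _ => by simp [invFactorialMatrix, invFactorial_zero]

end invFactorialMatrix

section YoungDiagram

variable {d : ℕ} (lam : Fin d → ℕ)

def corners : Finset (Fin d) :=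
  {i | 0 < lam i ∧ ∀ i', i < i' → lam i' < lam i}

def removeBox (i : Fin d) : Fin d → ℕ :=
  Function.update lam i (lam i - 1)

variable {lam}

lemma mem_corners {i : Fin d} : i ∈ corners lam ↔ 0 < lam i ∧ ∀ i', i < i' → lam i' < lam i := by
  simp [corners]

lemma removeBox_apply (i i' : Fin d) :
    removeBox lam i i' = if i' = i then lam i - 1 else lam i' :=
  Function.update_apply lam i _ i'

lemma lt_removeBox_iff {i : Fin d} (hi : 0 < lam i) {i' : Fin d} {j : ℕ} :
    j < removeBox lam i i' ↔ j < lam i' ∧ ¬(i' = i ∧ j = lam i - 1) := by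
  rw [removeBox_apply]
  split_ifs with h <;> grind

lemma sum_removeBox {i : Fin d} (hi : 0 < lam i) :
    ∑ k, removeBox lam i k = ∑ k, lam k - 1 := by
  have h := sum_update_of_mem (mem_univ i) lam (lam i - 1)
  rw [sdiff_singleton_eq_erase] at h
  have := add_sum_erase univ lam (mem_univ i)
  rw [removeBox, h]
  omega

lemma antitone_removeBox (hlam : Antitone lam) {i : Fin d} (hi : i ∈ corners lam) :
    Antitone (removeBox lam i) := by
  intro k l hkl
  have := hlam hkl
  have := (mem_corners.1 hi).2 l
  simp only [removeBox_apply]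
  split_ifs <;> grind

lemma natCast_removeBox {i : Fin d} (hi : 0 < lam i) :
    (fun k => (removeBox lam i k : ℤ)) = (fun k => (lam k : ℤ)) - Pi.single i 1 := by
  ext k
  rcases eq_or_ne k i with rfl | hk <;> simp [removeBox_apply, *]

end YoungDiagram

lemma det_invFactorialMatrix_sub_single_eq_zero {d : ℕ} {lam : Fin d → ℕ} (hlam : Antitone lam)
    {i : Fin d} (hi : i ∉ corners lam) :
    (invFactorialMatrix ((fun k => (lam k : ℤ)) - Pi.single i 1)).det = 0 := by
  simp only [mem_corners, not_and, not_forall, not_lt] at hi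
  by_cases hlast : (i : ℕ) + 1 < d
  · set i' : Fin d := ⟨i + 1, hlast⟩
    have hii' : i < i' := Fin.lt_def.2 (Nat.lt_succ_self _)
    -- as `i` is not a corner, row `i + 1` is as long as row `i`: the lowered row `i` repeats it
    have hlam' : lam i' = lam i := by
      have := hlam hii'.le
      rcases Nat.eq_zero_or_pos (lam i) with h | h
      · omega
      · obtain ⟨i'', hi'', hle⟩ := hi h
        have := hlam (Fin.le_def.2 (Fin.lt_def.1 hi'') : i' ≤ i'')
        omega
    refine det_invFactorialMatrix_eq_zero_of_eq _ hii'.ne ?_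
    simp [hii'.ne', hlam', i']
    ring
  · -- `i` is the last row, and it is empty: the lowered row `i` is zero
    have hlam0 : lam i = 0 := by
      by_contra h
      obtain ⟨i'', hi'', -⟩ := hi (Nat.pos_of_ne_zero h)
      have := Fin.lt_def.1 hi''
      omega
    refine det_invFactorialMatrix_eq_zero_of_add_le _ (i := i) ?_
    simp [hlam0]
    omega

theorem sum_mul_det_invFactorialMatrix {d : ℕ} {lam : Fin d → ℕ} (hlam : Antitone lam) :
    ((∑ i, lam i : ℕ) : ℝ) * (invFactorialMatrix fun k => (lam k : ℤ)).det =
      ∑ i ∈ corners lam, (invFactorialMatrix fun k => (removeBox lam i k : ℤ)).det := by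
  have h := sum_det_invFactorialMatrix_sub_single fun k => (lam k : ℤ)
  simp only [Int.cast_natCast] at h
  rw [Nat.cast_sum, ← h, ← sum_subset (subset_univ _)]
  · refine sum_congr rfl fun i hi => ?_
    rw [natCast_removeBox (mem_corners.1 hi).1]
  · exact fun i _ hi => det_invFactorialMatrix_sub_single_eq_zero hlam hi

def setEntry {d : ℕ} (T : Fin d → ℕ → ℕ) (i : Fin d) (c m : ℕ) : Fin d → ℕ → ℕ :=
  fun i' j => if i' = i ∧ j = c then m else T i' j

lemma setEntry_setEntry_of_eq {d : ℕ} {T : Fin d → ℕ → ℕ} {i : Fin d} {c m m' : ℕ}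
    (h : T i c = m') : setEntry (setEntry T i c m) i c m' = T := by
  ext i' j
  simp only [setEntry]
  grind

section SYT

variable {d : ℕ} {lam : Fin d → ℕ} {T : Fin d → ℕ → ℕ}

lemma IsSYT.le_sum (hT : IsSYT d lam T) (i : Fin d) (j : ℕ) : T i j ≤ ∑ k, lam k := by
  by_cases h : j < lam i
  · exact (hT.1 i j h).2
  · rw [hT.2.2.2.2.2 i j h]
    exact Nat.zero_le _

instance : Finite {T // IsSYT d lam T} := by
  set n := ∑ k, lam k
  refine Finite.of_injective (fun (T : {T // IsSYT d lam T}) (i : Fin d) (j : Fin n) =>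
    (⟨T.1 i j, Nat.lt_succ_of_le (T.2.le_sum i j)⟩ : Fin (n + 1))) fun T T' h => ?_
  ext i j
  by_cases hj : j < n
  · simpa using congrFun (congrFun h i) ⟨j, hj⟩
  · have : lam i ≤ n := single_le_sum (fun k _ => Nat.zero_le (lam k)) (mem_univ i)
    rw [T.2.2.2.2.2.2 i j (by omega), T'.2.2.2.2.2.2 i j (by omega)]

lemma sytCount_of_sum_eq_zero (h : ∑ k, lam k = 0) : sytCount d lam = 1 := by
  have hlam : ∀ i, lam i = 0 := fun i => sum_eq_zero_iff.1 h i (mem_univ i)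
  have hzero : IsSYT d lam 0 := by
    refine ⟨?_, ?_, fun m hm1 hm2 => by omega, ?_, ?_, ?_⟩ <;> simp [hlam]
  rw [sytCount, Nat.card_eq_one_iff_unique]
  refine ⟨⟨fun T T' => ?_⟩, ⟨⟨0, hzero⟩⟩⟩
  ext i j
  rw [T.2.2.2.2.2.2 i j (by simp [hlam]), T'.2.2.2.2.2.2 i j (by simp [hlam])]

lemma IsSYT.exists_mem_corners (hT : IsSYT d lam T) (hn : 0 < ∑ k, lam k) :
    ∃ i ∈ corners lam, T i (lam i - 1) = ∑ k, lam k := by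
  obtain ⟨hbound, -, hsurj, hrow, hcol, -⟩ := hT
  obtain ⟨i, j, hj, hTij⟩ := hsurj _ hn le_rfl
  have hlast : j = lam i - 1 := by
    by_contra h
    have := hrow i j (j + 1) j.lt_succ_self (by omega)
    have := (hbound i (j + 1) (by omega)).2
    omega
  refine ⟨i, mem_corners.2 ⟨by omega, fun i' hi' => ?_⟩, hlast ▸ hTij⟩
  by_contra h
  have := hcol i i' j hi' (by omega)
  have := (hbound i' j (by omega)).2
  omega

lemma IsSYT.removeCorner (hT : IsSYT d lam T) {i : Fin d} (hi : i ∈ corners lam)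
    (hTi : T i (lam i - 1) = ∑ k, lam k) :
    IsSYT d (removeBox lam i) (setEntry T i (lam i - 1) 0) := by
  obtain ⟨hpos, hcorner⟩ := mem_corners.1 hi
  obtain ⟨hbound, hinj, hsurj, hrow, hcol, hzero⟩ := hT
  simp only [IsSYT, setEntry, lt_removeBox_iff hpos, sum_removeBox hpos]
  refine ⟨?_, ?_, ?_, ?_, ?_, ?_⟩
  · grind
  · grind
  · intro m hm1 hm2
    obtain ⟨i', j, hj, hm⟩ := hsurj m hm1 (by omega)
    exact ⟨i', j, by grind⟩
  · grind
  · grind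
  · grind

lemma IsSYT.addCorner {i : Fin d} (hi : i ∈ corners lam) (hT : IsSYT d (removeBox lam i) T) :
    IsSYT d lam (setEntry T i (lam i - 1) (∑ k, lam k)) := by
  obtain ⟨hpos, hcorner⟩ := mem_corners.1 hi
  have hn : lam i ≤ ∑ k, lam k := single_le_sum (fun k _ => Nat.zero_le (lam k)) (mem_univ i)
  have hle := hT.le_sum
  obtain ⟨hbound, hinj, hsurj, hrow, hcol, hzero⟩ := hT
  simp only [lt_removeBox_iff hpos, sum_removeBox hpos] at hle hbound hinj hsurj hrow hcol hzero
  simp only [IsSYT, setEntry]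
  -- the new entry exceeds every entry of `T`, and the corner ends its row and its column
  refine ⟨?_, ?_, ?_, ?_, ?_, ?_⟩
  · grind
  · grind
  · intro m hm1 hm2
    rcases eq_or_ne m (∑ k, lam k) with rfl | hm
    · exact ⟨i, lam i - 1, by grind⟩
    · obtain ⟨i', j, hj, hm⟩ := hsurj m hm1 (by omega)
      exact ⟨i', j, by grind⟩
  · grind
  · grind
  · grind

def removeCornerEquiv {i : Fin d} (hi : i ∈ corners lam) :
    {T // IsSYT d lam T ∧ T i (lam i - 1) = ∑ k, lam k} ≃ {T // IsSYT d (removeBox lam i) T} where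
  toFun T := ⟨setEntry T.1 i (lam i - 1) 0, T.2.1.removeCorner hi T.2.2⟩
  invFun T := ⟨setEntry T.1 i (lam i - 1) (∑ k, lam k), T.2.addCorner hi, by simp [setEntry]⟩
  left_inv T := Subtype.ext (setEntry_setEntry_of_eq T.2.2)
  right_inv T := Subtype.ext <| setEntry_setEntry_of_eq <|
    T.2.2.2.2.2.2 i _ (by rw [lt_removeBox_iff (mem_corners.1 hi).1]; simp)

noncomputable def sigmaCornerEquiv (hn : 0 < ∑ k, lam k) :
    (Σ i : corners lam, {T // IsSYT d lam T ∧ T i (lam i - 1) = ∑ k, lam k}) ≃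
      {T // IsSYT d lam T} := by
  refine .ofBijective (fun T => ⟨T.2.1, T.2.2.1⟩) ⟨fun ⟨i, T⟩ ⟨i', T'⟩ h => ?_, ?_⟩
  · have hT : T.1 = T'.1 := congrArg Subtype.val h
    have hii' : i = i' := by
      have hpos := (mem_corners.1 i.2).1
      have hpos' := (mem_corners.1 i'.2).1
      exact Subtype.ext (T.2.1.2.1 i (lam i - 1) i' (lam i' - 1) (by omega) (by omega)
        (by rw [T.2.2, hT, T'.2.2])).1
    exact Sigma.subtype_ext hii' hT
  · rintro ⟨T, hT⟩
    obtain ⟨i, hi, hTi⟩ := hT.exists_mem_corners hn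
    exact ⟨⟨⟨i, hi⟩, T, hT, hTi⟩, rfl⟩

theorem sytCount_eq_sum_corners (hn : 0 < ∑ k, lam k) :
    sytCount d lam = ∑ i ∈ corners lam, sytCount d (removeBox lam i) := by
  rw [← sum_coe_sort, sytCount, ← Nat.card_congr (sigmaCornerEquiv hn),
    Nat.card_congr (.sigmaCongrRight fun i => removeCornerEquiv i.2), Nat.card_sigma]
  rfl

end SYT

theorem sytCount_eq_factorial_mul_det_general
    (d : ℕ) (lam : Fin d → ℕ) (hlam : Antitone lam)
    (n : ℕ) (hn : ∑ i, lam i = n) :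
    (sytCount d lam : ℝ) =
      (n.factorial : ℝ) *
        Matrix.det (Matrix.of fun i j : Fin d =>
          invFactorial ((lam i : ℤ) - (i : ℤ) + (j : ℤ))) := by
  change _ = _ * (invFactorialMatrix fun i => (lam i : ℤ)).det
  induction n generalizing lam with
  | zero =>
    have hlam0 : (fun i => (lam i : ℤ)) = 0 := funext fun i => by
      simp [sum_eq_zero_iff.1 hn i (mem_univ i)]
    rw [sytCount_of_sum_eq_zero hn, hlam0, det_invFactorialMatrix_zero]
    simp
  | succ m ih =>
    have hrec (i) (hi : i ∈ corners lam) : (sytCount d (removeBox lam i) : ℝ) =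
        m.factorial * (invFactorialMatrix fun k => (removeBox lam i k : ℤ)).det :=
      ih _ (antitone_removeBox hlam hi) (by rw [sum_removeBox (mem_corners.1 hi).1, hn]; rfl)
    rw [sytCount_eq_sum_corners (by omega), Nat.cast_sum, sum_congr rfl hrec, ← mul_sum,
      ← sum_mul_det_invFactorialMatrix hlam, hn, Nat.factorial_succ]
    push_cast
    ring

/-- The determinantal formula of Frobenius and MacMahon: the number of standard Young
tableaux of shape `λ = (λ₁, …, λ_d)` with `n` boxes equals
`n! · det(1/(λ_i - i + j)!)_{1 ≤ i,j ≤ d}`. -/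
theorem sytCount_eq_factorial_mul_det
    (d : ℕ) (hd : 1 ≤ d) (lam : Fin d → ℕ) (hlam : Antitone lam)
    (n : ℕ) (hn : ∑ i, lam i = n) :
    (sytCount d lam : ℝ) =
      (n.factorial : ℝ) *
        Matrix.det (Matrix.of fun i j : Fin d =>
          invFactorial ((lam i : ℤ) - (i : ℤ) + (j : ℤ))) :=
  sytCount_eq_factorial_mul_det_general d lam hlam n hn
end

section
/- Fix an integer d ≥ 1. For each n ≥ 1 define f_n : ℝ → ℝ to be the function which is constant on each interval [ (k − n/d)/√(n/d), (k+1 − n/d)/√(n/d) ) for every integer k, and which satisfies f_n( (k − n/d)/√(n/d) ) = √(n/d) · (n/d)^k e^{−n/d} / k! if k is a non-negative integer, and 0 if k is a negative integer. Then there exist constants C₁ < 0 and C₂ > 0 (independent of n) with the following properties: (i) for all n ≥ 1 and all points y₁ = (k₁ − n/d)/√(n/d) and y₂ = (k₂ − n/d)/√(n/d) with k₁, k₂ integers and y₁ < y₂ ≤ C₁, one has f_n(y₁) ≤ f_n(y₂) · e^{y₁ − y₂}; (ii) for all n ≥ 1 and all such points with C₂ ≤ y₁ < y₂, one has f_n(y₂)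 ≤ f_n(y₁) · e^{y₁ − y₂}. -/
/-- The point `(k - n/d)/√(n/d)`, the left endpoint of the `k`-th interval of constancy
of `f_n`. -/
noncomputable def gridPt (d n : ℕ) (k : ℤ) : ℝ :=
  ((k : ℝ) - (n : ℝ) / d) / Real.sqrt ((n : ℝ) / d)

/-!
On the grid, `f_n` is `√c` times the Poisson weights of mean `c = n/d`, whose consecutive
ratio is `c / (k + 1)`, and the grid spacing is `1/√c`. Both tails therefore reduce to
comparing that ratio with `e^{∓1/√c}` one step at a time: below `c - √c` one has
`(k + 1)/c ≤ 1 - 1/√c ≤ e^{-1/√c}`, and above `c + e^{√d} √c` one has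
`c e^{1/√c} ≤ k + 1`, because `e^x ≤ 1 + x e^x` and `1/√c ≤ √d`.
-/

open Real

section ExponentialSlope

variable {a : ℤ → ℝ} {h : ℝ} {k₁ k₂ : ℤ}

theorem le_mul_exp_of_forall_le_succ_mul_exp (hk : k₁ ≤ k₂)
    (step : ∀ k < k₂, a k ≤ a (k + 1) * exp (-h)) :
    a k₁ ≤ a k₂ * exp ((k₁ - k₂) * h) := by
  induction k₁, hk using Int.leInductionDown with
  | base => simp
  | pred k hk ih =>
    calc a (k - 1) ≤ a k * exp (-h) := by simpa using step (k - 1) (by lia)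
      _ ≤ a k₂ * exp ((k - k₂) * h) * exp (-h) := by gcongr
      _ = a k₂ * exp (((k - 1 : ℤ) - k₂) * h) := by
        rw [mul_assoc, ← exp_add]; push_cast; ring_nf

theorem le_mul_exp_of_forall_succ_le_mul_exp (hk : k₁ ≤ k₂)
    (step : ∀ k, k₁ ≤ k → a (k + 1) ≤ a k * exp (-h)) :
    a k₂ ≤ a k₁ * exp ((k₁ - k₂) * h) := by
  induction k₂, hk using Int.leInduction with
  | base => simp
  | succ k hk ih =>
    calc a (k + 1) ≤ a k * exp (-h) := step k hk
      _ ≤ a k₁ * exp ((k₁ - k) * h) * exp (-h) := by gcongr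
      _ = a k₁ * exp ((k₁ - (k + 1 : ℤ)) * h) := by
        rw [mul_assoc, ← exp_add]; push_cast; ring_nf

end ExponentialSlope

section PoissonRecursion

variable {a : ℤ → ℝ} {c h : ℝ} {k : ℤ}

theorem le_succ_mul_exp_of_succ_mul_eq (hrec : a (k + 1) * (k + 1) = a k * c) (hc : 0 < c)
    (ha : 0 ≤ a (k + 1)) (hk : (k + 1 : ℝ) ≤ c * exp (-h)) :
    a k ≤ a (k + 1) * exp (-h) := by
  refine le_of_mul_le_mul_right ?_ hc
  calc a k * c = a (k + 1) * (k + 1) := hrec.symm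
    _ ≤ a (k + 1) * (c * exp (-h)) := by gcongr
    _ = a (k + 1) * exp (-h) * c := by ring

theorem succ_le_mul_exp_of_succ_mul_eq (hrec : a (k + 1) * (k + 1) = a k * c) (hc : 0 < c)
    (ha : 0 ≤ a k) (hk : c * exp h ≤ k + 1) :
    a (k + 1) ≤ a k * exp (-h) := by
  have hk' : c ≤ (k + 1) * exp (-h) := by
    rwa [← div_le_iff₀ (exp_pos _), div_eq_mul_inv, ← exp_neg, neg_neg]
  refine le_of_mul_le_mul_right ?_ ((mul_pos hc (exp_pos h)).trans_le hk)
  calc a (k + 1) * (k + 1) = a k * c := hrec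
    _ ≤ a k * ((k + 1) * exp (-h)) := by gcongr
    _ = a k * exp (-h) * (k + 1) := by ring

end PoissonRecursion

theorem sub_sqrt_le_mul_exp_neg_inv_sqrt {c : ℝ} (hc : 0 ≤ c) :
    c - √c ≤ c * exp (-(√c)⁻¹) := by
  calc c - √c = c * (1 - (√c)⁻¹) := by rw [mul_sub, ← div_eq_mul_inv, div_sqrt, mul_one]
    _ ≤ c * exp (-(√c)⁻¹) := by gcongr; exact one_sub_le_exp_neg _

theorem mul_exp_inv_sqrt_le {c D : ℝ} (hc : 0 ≤ c) (hcD : c⁻¹ ≤ D) :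
    c * exp (√c)⁻¹ ≤ c + exp √D * √c := by
  have hx : (√c)⁻¹ ≤ √D := by rw [← sqrt_inv]; exact sqrt_le_sqrt hcD
  set x := (√c)⁻¹
  have hexp : exp x ≤ 1 + x * exp x := by
    have := mul_le_mul_of_nonneg_right (one_sub_le_exp_neg x) (exp_pos x).le
    rw [← exp_add, neg_add_cancel, exp_zero] at this
    linarith
  calc c * exp x ≤ c * (1 + x * exp √D) := by gcongr; exact hexp.trans (by gcongr)
    _ = c + exp √D * (c * x) := by ring
    _ = c + exp √D * √c := by rw [← div_eq_mul_inv, div_sqrt]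

section GridValues

variable {d n : ℕ}

theorem fn_nonneg (y : ℝ) : 0 ≤ fn d n y := by
  unfold fn
  dsimp only
  split_ifs <;> positivity

theorem gridPt_sub (k₁ k₂ : ℤ) :
    gridPt d n k₁ - gridPt d n k₂ = (k₁ - k₂) / √((n : ℝ) / d) := by
  unfold gridPt; ring

theorem gridPt_lt_gridPt_iff (hc : 0 < (n : ℝ) / d) {k₁ k₂ : ℤ} :
    gridPt d n k₁ < gridPt d n k₂ ↔ k₁ < k₂ := by
  unfold gridPt
  rw [div_lt_div_iff_of_pos_right (sqrt_pos.2 hc), sub_lt_sub_iff_right, Int.cast_lt]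

theorem gridPt_le_iff (hc : 0 < (n : ℝ) / d) {k : ℤ} {y : ℝ} :
    gridPt d n k ≤ y ↔ k ≤ (n : ℝ) / d + y * √((n : ℝ) / d) := by
  unfold gridPt
  rw [div_le_iff₀ (sqrt_pos.2 hc), sub_le_iff_le_add']

theorem le_gridPt_iff (hc : 0 < (n : ℝ) / d) {k : ℤ} {y : ℝ} :
    y ≤ gridPt d n k ↔ (n : ℝ) / d + y * √((n : ℝ) / d) ≤ k := by
  unfold gridPt
  rw [le_div_iff₀ (sqrt_pos.2 hc), le_sub_iff_add_le']

theorem fn_gridPt (hc : 0 < (n : ℝ) / d) (k : ℤ) :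
    fn d n (gridPt d n k) = if 0 ≤ k then
      √((n : ℝ) / d) * ((n : ℝ) / d) ^ k.toNat * exp (-((n : ℝ) / d)) / k.toNat.factorial
    else 0 := by
  unfold fn gridPt
  simp only [div_mul_cancel₀ _ (sqrt_pos.2 hc).ne', sub_add_cancel, Int.floor_intCast]

theorem fn_gridPt_succ_mul (hc : 0 < (n : ℝ) / d) (k : ℤ) :
    fn d n (gridPt d n (k + 1)) * (k + 1) = fn d n (gridPt d n k) * ((n : ℝ) / d) := by
  rw [fn_gridPt hc, fn_gridPt hc]
  rcases lt_trichotomy k (-1) with hk | rfl | hk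
  · rw [if_neg (by lia), if_neg (by lia), zero_mul, zero_mul]
  · simp
  · obtain ⟨m, rfl⟩ := Int.eq_ofNat_of_zero_le (by lia : 0 ≤ k)
    rw [if_pos (by lia), if_pos (by lia), Int.toNat_natCast, ← Nat.cast_succ, Int.toNat_natCast,
      Nat.factorial_succ, pow_succ]
    push_cast
    field_simp

end GridValues

/-- There are constants `C₁ < 0 < C₂`, independent of `n`, such that:
(i) for grid points `y₁ < y₂ ≤ C₁` one has `f_n(y₁) ≤ f_n(y₂) e^{y₁ - y₂}`;
(ii) for grid points `C₂ ≤ y₁ < y₂` one has `f_n(y₂) ≤ f_n(y₁) e^{y₁ - y₂}`. -/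
theorem fn_exponential_tail_bounds (d : ℕ) (hd : 1 ≤ d) :
    ∃ C₁ C₂ : ℝ, C₁ < 0 ∧ 0 < C₂ ∧
      (∀ n : ℕ, 1 ≤ n → ∀ k₁ k₂ : ℤ,
        gridPt d n k₁ < gridPt d n k₂ → gridPt d n k₂ ≤ C₁ →
          fn d n (gridPt d n k₁) ≤
            fn d n (gridPt d n k₂) * Real.exp (gridPt d n k₁ - gridPt d n k₂)) ∧
      (∀ n : ℕ, 1 ≤ n → ∀ k₁ k₂ : ℤ,
        C₂ ≤ gridPt d n k₁ → gridPt d n k₁ < gridPt d n k₂ →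
          fn d n (gridPt d n k₂) ≤
            fn d n (gridPt d n k₁) * Real.exp (gridPt d n k₁ - gridPt d n k₂)) := by
  refine ⟨-1, exp √d, by norm_num, exp_pos _, ?_, ?_⟩
  · intro n hn k₁ k₂ hlt hle
    have hc : 0 < (n : ℝ) / d := div_pos (by exact_mod_cast hn) (by exact_mod_cast hd)
    rw [gridPt_le_iff hc] at hle
    rw [gridPt_sub, div_eq_mul_inv]
    refine le_mul_exp_of_forall_le_succ_mul_exp (a := fun k ↦ fn d n (gridPt d n k))
      ((gridPt_lt_gridPt_iff hc).1 hlt).le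
      fun k hk ↦ le_succ_mul_exp_of_succ_mul_eq (a := fun k ↦ fn d n (gridPt d n k))
        (fn_gridPt_succ_mul hc k) hc (fn_nonneg _) ?_
    calc (k + 1 : ℝ) ≤ k₂ := by exact_mod_cast hk
      _ ≤ (n : ℝ) / d - √((n : ℝ) / d) := by linarith
      _ ≤ _ := sub_sqrt_le_mul_exp_neg_inv_sqrt hc.le
  · intro n hn k₁ k₂ hge hlt
    have hc : 0 < (n : ℝ) / d := div_pos (by exact_mod_cast hn) (by exact_mod_cast hd)
    have hcd : ((n : ℝ) / d)⁻¹ ≤ d := by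
      rw [inv_div]; exact div_le_self d.cast_nonneg (by exact_mod_cast hn)
    rw [le_gridPt_iff hc] at hge
    rw [gridPt_sub, div_eq_mul_inv]
    refine le_mul_exp_of_forall_succ_le_mul_exp (a := fun k ↦ fn d n (gridPt d n k))
      ((gridPt_lt_gridPt_iff hc).1 hlt).le
      fun k hk ↦ succ_le_mul_exp_of_succ_mul_eq (a := fun k ↦ fn d n (gridPt d n k))
        (fn_gridPt_succ_mul hc k) hc (fn_nonneg _) ?_
    calc (n : ℝ) / d * exp (√((n : ℝ) / d))⁻¹
        ≤ (n : ℝ) / d + exp √d * √((n : ℝ) / d) := mul_exp_inv_sqrt_le hc.le hcd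
      _ ≤ k₁ := hge
      _ ≤ k + 1 := by exact_mod_cast hk.trans (Int.le_add_one le_rfl)
end

section
/- Let A be a random 2 × 2 Hermitian matrix distributed according to the Gaussian measure with density (1/Z₂) e^{−(1/2) Tr H²} with respect to Lebesgue measure on 2 × 2 Hermitian matrices, and let B = A − (Tr A / 2) · I be the corresponding 2 × 2 traceless GUE random matrix. Let x₁ denote the largest eigenvalue of B. Then the random variable 2 · x₁² = Tr B² is distributed according to the chi-squared distribution with 3 degrees of freedom; equivalently, √2 · x₁ is distributed as the Euclidean norm of a standard Gaussian random vector in ℝ³. -/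
open Finset MeasureTheory

noncomputable instance matrixComplexMeasurableSpace (d : ℕ) :
    MeasurableSpace (Matrix (Fin d) (Fin d) ℂ) :=
  (inferInstance : MeasurableSpace (Fin d → Fin d → ℂ))

/-- The real-linear parametrization of the space of `d × d` Hermitian matrices by `d²` real
coordinates: `X i i` are the diagonal entries, and for `i < j` the entry `(i,j)` is
`X i j + 𝑖 X j i`. Lebesgue measure on the space of Hermitian matrices corresponds under
this parametrization (up to a constant factor, absorbed in normalizing constants) to
Lebesgue measure on the coordinates. -/
noncomputable def hermOfReal (d : ℕ) (X : Fin d → Fin d → ℝ) : Matrix (Fin d) (Fin d) ℂ :=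
  Matrix.of fun i j =>
    if i = j then (X i i : ℂ)
    else if i < j then (X i j : ℂ) + (X j i : ℂ) * Complex.I
    else (X j i : ℂ) - (X i j : ℂ) * Complex.I

/-- The Gaussian Unitary Ensemble: the probability measure on (the space of) `d × d`
Hermitian matrices with density `(1/Z) e^{-(1/2) Tr H²}` with respect to Lebesgue measure,
written via the parametrization `hermOfReal`. `Z` is the normalizing constant. -/
noncomputable def gueMeasure (d : ℕ) (Z : ℝ) : Measure (Matrix (Fin d) (Fin d) ℂ) :=
  Measure.map (hermOfReal d)
    (volume.withDensity fun X : Fin d → Fin d → ℝ =>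
      ENNReal.ofReal
        ((1 / Z) * Real.exp (-(Matrix.trace (hermOfReal d X ^ 2)).re / 2)))

/-- The traceless part `A - (Tr A / d) · 1` of a `d × d` matrix `A`. -/
noncomputable def traceless (d : ℕ) (A : Matrix (Fin d) (Fin d) ℂ) :
    Matrix (Fin d) (Fin d) ℂ :=
  A - (Matrix.trace A / d) • (1 : Matrix (Fin d) (Fin d) ℂ)

/-- The eigenvalues of a Hermitian matrix, sorted in decreasing order
(`sortedEigenvalues d A 0` is the largest one); junk value `0` for non-Hermitian `A`. -/
noncomputable def sortedEigenvalues (d : ℕ) (A : Matrix (Fin d) (Fin d) ℂ) :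
    Fin d → ℝ :=
  if h : A.IsHermitian then fun i => h.eigenvalues (Tuple.sort h.eigenvalues i.rev)
  else 0

/-- The chi-squared distribution with 3 degrees of freedom: the law of `Z₁² + Z₂² + Z₃²`
for independent standard normal random variables `Z₁, Z₂, Z₃`, i.e. the law of the squared
Euclidean norm of a standard Gaussian random vector in `ℝ³`. -/
noncomputable def chiSquared3 : Measure ℝ :=
  Measure.map (fun z : Fin 3 → ℝ => ∑ i, (z i) ^ 2)
    (Measure.pi fun _ : Fin 3 => ProbabilityTheory.gaussianReal 0 1)

/-! Write `H = hermOfReal 2 X = [[a, b + i c], [b - i c, d]]`. In the coordinates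
`y = ((a + d) / √2, (a - d) / √2, √2 b, √2 c)` one has `Tr H² = ‖y‖²`, so the GUE density
becomes a multiple of the standard Gaussian density on `ℝ⁴`, and normalization forces the
multiple to be one. The traceless part `B` of `H` has coordinates `(0, y₂, y₃, y₄)`, so
`Tr B² = y₂² + y₃² + y₄²` is `χ²₃`-distributed. Finally `B` has eigenvalues `±x₁`, whence
`Tr B² = 2 x₁²`. -/

open ProbabilityTheory Real
open scoped ENNReal

namespace MeasureTheory

variable {α β E : Type*} [MeasurableSpace α] [MeasurableSpace β] [MeasurableSpace E]

theorem lintegral_fin_nat_prod_eq_prod {n : ℕ} {μ : Fin n → Measure E}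
    [∀ i, SigmaFinite (μ i)] {f : Fin n → E → ℝ≥0∞} (hf : ∀ i, Measurable (f i)) :
    ∫⁻ x, ∏ i, f i (x i) ∂(Measure.pi μ) = ∏ i, ∫⁻ x, f i x ∂(μ i) := by
  induction n with
  | zero => simp
  | succ n ih =>
    calc _ = ∫⁻ x : E × (Fin n → E), f 0 x.1 * ∏ i : Fin n, f i.succ (x.2 i)
            ∂((μ 0).prod (Measure.pi fun i ↦ μ i.succ)) := by
          rw [← ((measurePreserving_piFinSuccAbove μ 0).symm).lintegral_comp_emb
            (MeasurableEquiv.measurableEmbedding _)]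
          simp_rw [MeasurableEquiv.piFinSuccAbove_symm_apply, Fin.insertNthEquiv,
            Fin.prod_univ_succ, Fin.insertNth_zero, Equiv.coe_fn_mk, Fin.cons_succ,
            Fin.zero_succAbove, cast_eq, Fin.cons_zero]
      _ = (∫⁻ x, f 0 x ∂μ 0) * ∏ i : Fin n, ∫⁻ x, f i.succ x ∂(μ i.succ) := by
          rw [← ih fun i ↦ hf i.succ, ← lintegral_prod_mul (hf 0).aemeasurable]
          exact (Finset.measurable_prod _ fun i _ ↦ (hf i.succ).comp
            (measurable_pi_apply i)).aemeasurable
      _ = ∏ i, ∫⁻ x, f i x ∂(μ i) := (Fin.prod_univ_succ fun i ↦ ∫⁻ x, f i x ∂(μ i)).symm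

theorem lintegral_fintype_prod_eq_prod {ι : Type*} [Fintype ι] {μ : ι → Measure E}
    [∀ i, SigmaFinite (μ i)] {f : ι → E → ℝ≥0∞} (hf : ∀ i, Measurable (f i)) :
    ∫⁻ x, ∏ i, f i (x i) ∂(Measure.pi μ) = ∏ i, ∫⁻ x, f i x ∂(μ i) := by
  let e := (Fintype.equivFin ι).symm
  rw [← (measurePreserving_piCongrLeft _ e).lintegral_comp_emb
    (MeasurableEquiv.measurableEmbedding _)]
  simp_rw [← e.prod_comp, MeasurableEquiv.coe_piCongrLeft, Equiv.piCongrLeft_apply_apply]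
  exact lintegral_fin_nat_prod_eq_prod fun i ↦ hf (e i)

theorem Measure.pi_withDensity {ι : Type*} [Fintype ι] (μ : ι → Measure E)
    [∀ i, SigmaFinite (μ i)] {f : ι → E → ℝ≥0∞} (hf : ∀ i, Measurable (f i))
    [∀ i, SigmaFinite ((μ i).withDensity (f i))] :
    Measure.pi (fun i ↦ (μ i).withDensity (f i))
      = (Measure.pi μ).withDensity fun x ↦ ∏ i, f i (x i) := by
  refine Measure.pi_eq fun s hs ↦ ?_
  rw [withDensity_apply _ (MeasurableSet.univ_pi hs), Measure.restrict_pi_pi μ s,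
    lintegral_fintype_prod_eq_prod hf]
  simp_rw [withDensity_apply _ (hs _)]

theorem Measure.map_withDensity_comp (μ : Measure α) {f : α → β} (hf : Measurable f)
    {g : β → ℝ≥0∞} (hg : Measurable g) :
    (μ.withDensity (g ∘ f)).map f = (μ.map f).withDensity g := by
  ext s hs
  rw [Measure.map_apply hf hs, withDensity_apply _ (hf hs), withDensity_apply _ hs,
    setLIntegral_map hs hg hf, Function.comp_def]

theorem Measure.eq_of_eq_smul_of_isProbabilityMeasure {μ ν : Measure α}
    [IsProbabilityMeasure μ] [IsProbabilityMeasure ν] {c : ℝ≥0∞} (h : μ = c • ν) : μ = ν := by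
  have hc : c = 1 := by simpa using (congrArg (· Set.univ) h).symm
  rw [h, hc, one_smul]

theorem map_linearMap_withDensity_comp {ι : Type*} [Fintype ι] {L : (ι → ℝ) →ₗ[ℝ] ι → ℝ}
    (hL : LinearMap.det L ≠ 0) {g : (ι → ℝ) → ℝ≥0∞} (hg : Measurable g) :
    (volume.withDensity (g ∘ L)).map L
      = ENNReal.ofReal |(LinearMap.det L)⁻¹| • volume.withDensity g := by
  rw [Measure.map_withDensity_comp _ (LinearMap.continuous_of_finiteDimensional L).measurable hg,
    Real.map_linearMap_volume_pi_eq_smul_volume_pi hL, withDensity_smul_measure]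

theorem measurePreserving_reindex_uncurry {ι κ ν : Type*} [Fintype ι] [Fintype κ] [Fintype ν]
    (e : ν ≃ ι × κ) (μ : Measure E) [SigmaFinite μ] :
    MeasurePreserving (fun X : ι → κ → E ↦ Function.uncurry X ∘ e)
      (Measure.pi fun _ ↦ Measure.pi fun _ ↦ μ) (Measure.pi fun _ ↦ μ) := by
  refine ⟨by fun_prop, (Measure.pi_eq fun s hs ↦ ?_).symm⟩
  have hpre : (fun X : ι → κ → E ↦ Function.uncurry X ∘ e) ⁻¹' Set.univ.pi s
      = Set.univ.pi fun i ↦ Set.univ.pi fun j ↦ s (e.symm (i, j)) := by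
    ext X
    simp only [Set.mem_preimage, Set.mem_univ_pi, Function.comp_apply, Function.uncurry_def,
      ← Prod.forall (p := fun p ↦ X p.1 p.2 ∈ s (e.symm p)), e.symm.forall_congr_left,
      Equiv.symm_symm, Equiv.symm_apply_apply]
  rw [Measure.map_apply (by fun_prop) (MeasurableSet.univ_pi hs), hpre, Measure.pi_pi]
  simp_rw [Measure.pi_pi]
  rw [← Fintype.prod_prod_type', ← e.symm.prod_comp]

theorem Measure.map_fin_tail_pi {n : ℕ} (μ : Measure E) [IsProbabilityMeasure μ] :
    (Measure.pi fun _ : Fin (n + 1) ↦ μ).map Fin.tail = Measure.pi fun _ : Fin n ↦ μ := by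
  have htail : (Fin.tail : (Fin (n + 1) → E) → Fin n → E)
      = Prod.snd ∘ MeasurableEquiv.piFinSuccAbove (fun _ ↦ E) 0 := rfl
  rw [htail, ← Measure.map_map measurable_snd (MeasurableEquiv.measurable _),
    (measurePreserving_piFinSuccAbove _ 0).map_eq, Measure.map_snd_prod, measure_univ, one_smul]

end MeasureTheory

section Gaussian

variable {ι : Type*} [Fintype ι]

theorem pi_gaussianReal_eq_withDensity :
    Measure.pi (fun _ : ι ↦ gaussianReal 0 1)
      = volume.withDensity fun y ↦ ∏ i, gaussianPDF 0 1 (y i) := by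
  have : IsProbabilityMeasure (volume.withDensity (gaussianPDF 0 1)) := by
    rw [← gaussianReal_of_var_ne_zero 0 one_ne_zero]; infer_instance
  rw [volume_pi, ← Measure.pi_withDensity _ fun _ ↦ measurable_gaussianPDF 0 1,
    gaussianReal_of_var_ne_zero 0 one_ne_zero]

theorem withDensity_exp_neg_sum_sq_div_two :
    (volume : Measure (ι → ℝ)).withDensity (fun y ↦ ENNReal.ofReal (exp (-(∑ i, y i ^ 2) / 2)))
      = ENNReal.ofReal (√(2 * π) ^ Fintype.card ι) • Measure.pi fun _ : ι ↦ gaussianReal 0 1 := by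
  rw [pi_gaussianReal_eq_withDensity, ← withDensity_smul _ (by fun_prop)]
  congr 1
  funext y
  have h2π : 0 < √(2 * π) := by positivity
  simp only [Pi.smul_apply, smul_eq_mul, gaussianPDF, gaussianPDFReal, NNReal.coe_one, mul_one,
    sub_zero]
  rw [← ENNReal.ofReal_prod_of_nonneg fun i _ ↦ by positivity, ← ENNReal.ofReal_mul (by positivity),
    Finset.prod_mul_distrib, Finset.prod_const, ← exp_sum, Finset.card_univ, ← mul_assoc,
    ← mul_pow, mul_inv_cancel₀ h2π.ne', one_pow, one_mul, ← Finset.sum_div, Finset.sum_neg_distrib]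

end Gaussian

namespace Matrix

variable {n : Type*} [Fintype n] [DecidableEq n] {𝕜 : Type*} [RCLike 𝕜]

theorem IsHermitian.trace_pow_eq_sum_eigenvalues_pow {A : Matrix n n 𝕜} (hA : A.IsHermitian)
    (k : ℕ) : (A ^ k).trace = ∑ i, (hA.eigenvalues i : 𝕜) ^ k := by
  conv_lhs => rw [hA.spectral_theorem, ← map_pow, Unitary.conjStarAlgAut_apply,
    trace_mul_cycle, Unitary.coe_star_mul_self, one_mul, diagonal_pow, trace_diagonal]
  rfl

theorem IsHermitian.two_mul_eigenvalues_sq_eq_trace_sq {B : Matrix (Fin 2) (Fin 2) ℂ}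
    (hB : B.IsHermitian) (htr : B.trace = 0) (j : Fin 2) :
    2 * (hB.eigenvalues j : ℂ) ^ 2 = (B ^ 2).trace := by
  have hsum : (hB.eigenvalues 0 : ℂ) + hB.eigenvalues 1 = 0 := by
    rw [← htr, hB.trace_eq_sum_eigenvalues, Fin.sum_univ_two]; rfl
  rw [hB.trace_pow_eq_sum_eigenvalues_pow, Fin.sum_univ_two]
  match j with
  | 0 => linear_combination ((hB.eigenvalues 0 : ℂ) - hB.eigenvalues 1) * hsum
  | 1 => linear_combination ((hB.eigenvalues 1 : ℂ) - hB.eigenvalues 0) * hsum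

end Matrix

theorem hermOfReal_isHermitian (d : ℕ) (X : Fin d → Fin d → ℝ) :
    (hermOfReal d X).IsHermitian := by
  ext i j
  simp only [Matrix.conjTranspose_apply, hermOfReal, Matrix.of_apply]
  rcases lt_trichotomy i j with h | rfl | h
  · simp [h, h.ne, h.ne', not_lt_of_gt h]
  · simp
  · simp [h, h.ne, h.ne', not_lt_of_gt h, sub_eq_add_neg]

theorem traceless_isHermitian {d : ℕ} {A : Matrix (Fin d) (Fin d) ℂ} (hA : A.IsHermitian) :
    (traceless d A).IsHermitian := by
  have htr : IsSelfAdjoint (A.trace / d) := by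
    rw [IsSelfAdjoint, star_div₀, ← Matrix.trace_conjTranspose, hA.eq, star_natCast]
  exact hA.sub (htr.smul Matrix.isHermitian_one)

theorem trace_traceless (d : ℕ) (A : Matrix (Fin d) (Fin d) ℂ) : (traceless d A).trace = 0 := by
  rcases eq_or_ne d 0 with rfl | hd
  · exact Matrix.trace_fin_zero _
  · simp [traceless, Matrix.trace_sub, Matrix.trace_smul, hd]

theorem sortedEigenvalues_mem_range {d : ℕ} {A : Matrix (Fin d) (Fin d) ℂ} (hA : A.IsHermitian)
    (i : Fin d) : sortedEigenvalues d A i ∈ Set.range hA.eigenvalues :=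
  ⟨_, by rw [sortedEigenvalues, dif_pos hA]⟩

theorem two_mul_sortedEigenvalues_traceless_sq (A : Matrix (Fin 2) (Fin 2) ℂ)
    (hA : A.IsHermitian) :
    2 * (sortedEigenvalues 2 (traceless 2 A) 0 : ℂ) ^ 2 = (traceless 2 A ^ 2).trace := by
  obtain ⟨j, hj⟩ := sortedEigenvalues_mem_range (traceless_isHermitian hA) 0
  rw [← hj]
  exact (traceless_isHermitian hA).two_mul_eigenvalues_sq_eq_trace_sq (trace_traceless 2 A) j

instance matrixComplexBorelSpace (d : ℕ) : BorelSpace (Matrix (Fin d) (Fin d) ℂ) :=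
  inferInstanceAs (BorelSpace (Fin d → Fin d → ℂ))

theorem measurable_hermOfReal (d : ℕ) : Measurable (hermOfReal d) := by
  apply Continuous.measurable
  refine continuous_pi fun i ↦ continuous_pi fun j ↦ ?_
  simp only [hermOfReal, Matrix.of_apply]
  split_ifs <;> fun_prop

theorem measurableSet_isHermitian (d : ℕ) :
    MeasurableSet {A : Matrix (Fin d) (Fin d) ℂ | A.IsHermitian} :=
  (isClosed_eq (by fun_prop) continuous_id).measurableSet

noncomputable def gueCoordMeasure (d : ℕ) (Z : ℝ) : Measure (Fin d → Fin d → ℝ) :=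
  volume.withDensity fun X ↦
    ENNReal.ofReal ((1 / Z) * exp (-(Matrix.trace (hermOfReal d X ^ 2)).re / 2))

theorem gueMeasure_eq_map (d : ℕ) (Z : ℝ) :
    gueMeasure d Z = (gueCoordMeasure d Z).map (hermOfReal d) := rfl

theorem isProbabilityMeasure_gueCoordMeasure {d : ℕ} {Z : ℝ}
    (h : IsProbabilityMeasure (gueMeasure d Z)) : IsProbabilityMeasure (gueCoordMeasure d Z) :=
  ⟨by simpa [gueMeasure_eq_map, Measure.map_apply (measurable_hermOfReal d) MeasurableSet.univ]
    using h.measure_univ⟩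

theorem ae_isHermitian_gueMeasure (d : ℕ) (Z : ℝ) : ∀ᵐ A ∂(gueMeasure d Z), A.IsHermitian :=
  (ae_map_iff (measurable_hermOfReal d).aemeasurable (measurableSet_isHermitian d)).2
    (Filter.Eventually.of_forall (hermOfReal_isHermitian d))

def flattenFinTwo (X : Fin 2 → Fin 2 → ℝ) : Fin 4 → ℝ :=
  Function.uncurry X ∘ (finProdFinEquiv : Fin 2 × Fin 2 ≃ Fin 4).symm

theorem measurePreserving_flattenFinTwo : MeasurePreserving flattenFinTwo volume volume :=
  measurePreserving_reindex_uncurry _ volume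

noncomputable def hermCoords (X : Fin 2 → Fin 2 → ℝ) : Fin 4 → ℝ :=
  ![(X 0 0 + X 1 1) / √2, (X 0 0 - X 1 1) / √2, √2 * X 0 1, √2 * X 1 0]

noncomputable def hermCoordsMatrix : Matrix (Fin 4) (Fin 4) ℝ :=
  !![(√2)⁻¹, 0, 0, (√2)⁻¹;
     (√2)⁻¹, 0, 0, -(√2)⁻¹;
     0, √2, 0, 0;
     0, 0, √2, 0]

theorem det_hermCoordsMatrix : hermCoordsMatrix.det = -2 := by
  have h2 : √2 ^ 2 = 2 := sq_sqrt zero_le_two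
  simp [hermCoordsMatrix, Matrix.det_succ_row_zero, Fin.sum_univ_succ, Fin.succAbove]
  ring_nf
  simp only [inv_pow, h2]
  norm_num

theorem hermCoords_eq_toLin'_comp :
    hermCoords = Matrix.toLin' hermCoordsMatrix ∘ flattenFinTwo := by
  funext X k
  have hflat : flattenFinTwo X = ![X 0 0, X 0 1, X 1 0, X 1 1] := by
    funext k
    fin_cases k <;> rfl
  rw [Function.comp_apply, hflat]
  fin_cases k <;>
    simp only [hermCoords, hermCoordsMatrix, Matrix.toLin'_apply, Matrix.mulVec, dotProduct,
      Matrix.of_apply, Matrix.cons_val', Matrix.cons_val_fin_one, Matrix.cons_val_zero,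
      Matrix.cons_val_one, Matrix.cons_val, Fin.sum_univ_four, Fin.isValue, Fin.zero_eta,
      Fin.mk_one, Fin.reduceFinMk] <;>
    ring

@[fun_prop]
theorem measurable_hermCoords : Measurable hermCoords := by
  rw [hermCoords_eq_toLin'_comp]
  exact (LinearMap.continuous_of_finiteDimensional _).measurable.comp
    measurePreserving_flattenFinTwo.measurable

theorem map_hermCoords_withDensity_comp {g : (Fin 4 → ℝ) → ℝ≥0∞} (hg : Measurable g) :
    (volume.withDensity (g ∘ hermCoords)).map hermCoords
      = ENNReal.ofReal 2⁻¹ • volume.withDensity g := by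
  have hflat := measurePreserving_flattenFinTwo
  have hL : (Matrix.toLin' hermCoordsMatrix).det ≠ 0 := by
    rw [LinearMap.det_toLin', det_hermCoordsMatrix]; norm_num
  have hLmeas :=
    (LinearMap.continuous_of_finiteDimensional (Matrix.toLin' hermCoordsMatrix)).measurable
  rw [hermCoords_eq_toLin'_comp, ← Measure.map_map hLmeas hflat.measurable, ← Function.comp_assoc,
    Measure.map_withDensity_comp _ hflat.measurable (hg.comp hLmeas), hflat.map_eq,
    map_linearMap_withDensity_comp hL hg, LinearMap.det_toLin', det_hermCoordsMatrix]
  norm_num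

theorem re_trace_hermOfReal_sq (X : Fin 2 → Fin 2 → ℝ) :
    (hermOfReal 2 X ^ 2).trace.re = ∑ i, hermCoords X i ^ 2 := by
  have h2 : √2 ^ 2 = 2 := sq_sqrt zero_le_two
  simp [hermOfReal, hermCoords, Matrix.trace_fin_two, sq, Matrix.mul_apply, Fin.sum_univ_four]
  ring_nf
  simp only [inv_pow, h2]
  ring

theorem re_trace_traceless_hermOfReal_sq (X : Fin 2 → Fin 2 → ℝ) :
    (traceless 2 (hermOfReal 2 X) ^ 2).trace.re = ∑ i : Fin 3, hermCoords X i.succ ^ 2 := by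
  have h2 : √2 ^ 2 = 2 := sq_sqrt zero_le_two
  simp [traceless, hermOfReal, hermCoords, sq, Matrix.trace_fin_two, Matrix.mul_apply,
    Fin.sum_univ_three]
  ring_nf
  simp only [inv_pow, h2]
  ring

theorem map_hermCoords_gueCoordMeasure (Z : ℝ) [IsProbabilityMeasure (gueCoordMeasure 2 Z)] :
    (gueCoordMeasure 2 Z).map hermCoords = Measure.pi fun _ ↦ gaussianReal 0 1 := by
  have : IsProbabilityMeasure ((gueCoordMeasure 2 Z).map hermCoords) :=
    Measure.isProbabilityMeasure_map measurable_hermCoords.aemeasurable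
  have hdens : (fun X ↦ ENNReal.ofReal ((1 / Z) * exp (-(hermOfReal 2 X ^ 2).trace.re / 2)))
      = ENNReal.ofReal (1 / Z) •
        ((fun y ↦ ENNReal.ofReal (exp (-(∑ i, y i ^ 2) / 2))) ∘ hermCoords) := by
    funext X
    simp [ENNReal.ofReal_mul' (exp_pos _).le, re_trace_hermOfReal_sq]
  refine Measure.eq_of_eq_smul_of_isProbabilityMeasure
    (c := ENNReal.ofReal (1 / Z) * ENNReal.ofReal 2⁻¹ * ENNReal.ofReal (√(2 * π) ^ 4)) ?_
  rw [gueCoordMeasure, hdens, withDensity_smul _ (by fun_prop), Measure.map_smul,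
    map_hermCoords_withDensity_comp (by fun_prop), withDensity_exp_neg_sum_sq_div_two,
    Fintype.card_fin, smul_smul, smul_smul]

theorem tracelessGUE_two_by_two_chiSquared_general
    (Z : ℝ) (hprob : IsProbabilityMeasure (gueMeasure 2 Z)) :
    (∀ A : Matrix (Fin 2) (Fin 2) ℂ, A.IsHermitian →
      2 * (sortedEigenvalues 2 (traceless 2 A) 0 : ℂ) ^ 2 =
        Matrix.trace (traceless 2 A ^ 2)) ∧
    Measure.map (fun A => 2 * (sortedEigenvalues 2 (traceless 2 A) 0) ^ 2)
        (gueMeasure 2 Z) = chiSquared3 := by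
  refine ⟨two_mul_sortedEigenvalues_traceless_sq, ?_⟩
  have := isProbabilityMeasure_gueCoordMeasure hprob
  have hF : Measurable fun A : Matrix (Fin 2) (Fin 2) ℂ ↦ (traceless 2 A ^ 2).trace.re :=
    Continuous.measurable (by unfold traceless; fun_prop)
  calc _ = (gueMeasure 2 Z).map fun A ↦ (traceless 2 A ^ 2).trace.re := by
        refine Measure.map_congr ?_
        filter_upwards [ae_isHermitian_gueMeasure 2 Z] with A hA
        rw [← two_mul_sortedEigenvalues_traceless_sq A hA]
        norm_cast
    _ = ((gueCoordMeasure 2 Z).map hermCoords).map (fun y ↦ ∑ i : Fin 3, y i.succ ^ 2) := by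
        rw [gueMeasure_eq_map, Measure.map_map hF (measurable_hermOfReal 2), Measure.map_map
          (by fun_prop) measurable_hermCoords]
        congr 1
        funext X
        exact re_trace_traceless_hermOfReal_sq X
    _ = chiSquared3 := by
        rw [map_hermCoords_gueCoordMeasure, chiSquared3, ← Measure.map_fin_tail_pi (n := 3),
          Measure.map_map (by fun_prop) (by fun_prop)]
        rfl

/-- Let `A` be a `2 × 2` GUE random matrix (law `gueMeasure 2 Z`, `Z` the normalizing
constant) and `B = A - (Tr A / 2) · 1` the corresponding traceless GUE matrix, with largest
eigenvalue `x₁`. Then `2 x₁² = Tr B²`, and the random variable `2 x₁²` is distributed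
according to the chi-squared distribution with 3 degrees of freedom. -/
theorem tracelessGUE_two_by_two_chiSquared
    (Z : ℝ) (hZ : 0 < Z) (hprob : IsProbabilityMeasure (gueMeasure 2 Z)) :
    (∀ A : Matrix (Fin 2) (Fin 2) ℂ, A.IsHermitian →
      2 * (sortedEigenvalues 2 (traceless 2 A) 0 : ℂ) ^ 2 =
        Matrix.trace (traceless 2 A ^ 2)) ∧
    Measure.map (fun A => 2 * (sortedEigenvalues 2 (traceless 2 A) 0) ^ 2)
        (gueMeasure 2 Z) = chiSquared3 :=
  tracelessGUE_two_by_two_chiSquared_general Z hprob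
end
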